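/- arXiv:1307.6052 — 6 statements merged into one kernel-verified Lean document; each statement's English description precedes it below -/
import Mathlib

section
/- For a non-degenerate arrow environment, if the asymptotic local time of the walk is infinite at some site x, then it is infinite at every site. Consequently, the asymptotic local time is either finite everywhere or infinite everywhere. -/
open MeasureTheory Filter

noncomputable section

attribute [local instance 10] Classical.propDecidable

/-- An arrow environment: for each site `x : ℤ` a sequence of arrows (values `±1`). -/
abbrev Env := ℤ → ℕ → ℤ

/-- A cookie environment. -/
abbrev CEnv := ℤ → ℕ → ℝ

/-- All arrows are `±1`. -/
def IsArrow (a : Env) : Prop := ∀ x n, a x n = 1 ∨ a x n = -1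

/-- Non-degeneracy: in every column there are infinitely many sign changes. -/
def NonDeg (a : Env) : Prop := ∀ x : ℤ, ∀ N : ℕ, ∃ n, N ≤ n ∧ a x n ≠ a x (n + 1)

/-- State of the single walk on an arrow environment started at `x0`:
position together with the local time function (number of visits so far). -/
def walkState (a : Env) (x0 : ℤ) : ℕ → ℤ × (ℤ → ℕ)
  | 0 => (x0, fun _ => 0)
  | t + 1 =>
    let s := walkState a x0 t
    let L' := Function.update s.2 s.1 (s.2 s.1 + 1)
    (s.1 + a s.1 (L' s.1), L')

/-- Position of the walk on `a` started at `x0` at time `t`. -/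
def walkX (a : Env) (x0 : ℤ) (t : ℕ) : ℤ := (walkState a x0 t).1

/-- Asymptotic local time of the walk on `a` started at `x0`, at site `x`. -/
def walkLocal (a : Env) (x0 x : ℤ) : ℕ∞ := ⨆ t, ((walkState a x0 t).2 x : ℕ∞)

/-- `a` is transient: the asymptotic local time of the walk started at `0` is finite everywhere. -/
def Transient (a : Env) : Prop := ∀ x : ℤ, walkLocal a 0 x < ⊤

/-- The leftover environment after the walk started at `0`. -/
def leftoverEnv (a : Env) : Env := fun x n => a x (n + (walkLocal a 0 x).toNat)

/-- Iterated leftover environments. -/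
def iterLO (a : Env) : ℕ → Env
  | 0 => a
  | j + 1 => leftoverEnv (iterLO a j)

/-- `a` is `k`-transient. -/
def KTransient (a : Env) (k : ℕ) : Prop := ∀ j < k, Transient (iterLO a j)

/-- `a` is `k`-right transient: each of the `k` sequential walkers tends to `+∞`. -/
def KRightTransient (a : Env) (k : ℕ) : Prop :=
  ∀ j < k, Tendsto (walkX (iterLO a j) 0) atTop atTop

/-- The sequential local time `L^{(k-seq)}`. -/
def seqLocal (a : Env) (k : ℕ) (x : ℤ) : ℕ :=
  ∑ j ∈ Finset.range k, (walkLocal (iterLO a j) 0 x).toNat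

/-- State of the `S`-mob walk of `k` particles with initial positions `init`. -/
def mobState (a : Env) {k : ℕ} (S : ℕ → Fin k) (init : Fin k → ℤ) :
    ℕ → (Fin k → ℤ) × (ℤ → ℕ)
  | 0 => (init, fun _ => 0)
  | t + 1 =>
    let s := mobState a S init t
    let pos := s.1 (S t)
    let L' := Function.update s.2 pos (s.2 pos + 1)
    (Function.update s.1 (S t) (pos + a pos (L' pos)), L')

/-- Asymptotic local time of the `S`-mob walk. -/
def mobLocal (a : Env) {k : ℕ} (S : ℕ → Fin k) (init : Fin k → ℤ) (x : ℤ) : ℕ∞ :=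
  ⨆ t, ((mobState a S init t).2 x : ℕ∞)

/-- A `k`-scheduling is proper if every particle is chosen infinitely often. -/
def ProperSched {k : ℕ} (S : ℕ → Fin k) : Prop := ∀ j : Fin k, ∀ N : ℕ, ∃ t, N ≤ t ∧ S t = j

/-- Smallest index attaining the minimum of `X`. -/
def minIdx {k : ℕ} (hk : k ≠ 0) (X : Fin k → ℤ) : Fin k :=
  (Finset.univ.filter fun j => ∀ i, X j ≤ X i).min' (by
    obtain ⟨j, -, hj⟩ := Finset.exists_min_image Finset.univ X
      ⟨⟨0, Nat.pos_of_ne_zero hk⟩, Finset.mem_univ _⟩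
    exact ⟨j, Finset.mem_filter.mpr ⟨Finset.mem_univ _, fun i => hj i (Finset.mem_univ _)⟩⟩)

/-- State of the `k`-min mob walk: at every step the leftmost particle
(ties broken by particle index) moves. -/
def minMobState (a : Env) {k : ℕ} (hk : k ≠ 0) (init : Fin k → ℤ) :
    ℕ → (Fin k → ℤ) × (ℤ → ℕ)
  | 0 => (init, fun _ => 0)
  | t + 1 =>
    let s := minMobState a hk init t
    let j := minIdx hk s.1
    let pos := s.1 j
    let L' := Function.update s.2 pos (s.2 pos + 1)
    (Function.update s.1 j (pos + a pos (L' pos)), L')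

/-- The `k`-minimum walk: position of the leftmost particle of the `k`-min mob walk. -/
def minWalkPos (a : Env) {k : ℕ} (hk : k ≠ 0) (init : Fin k → ℤ) (t : ℕ) : ℤ :=
  (minMobState a hk init t).1 (minIdx hk (minMobState a hk init t).1)

/-- The position reached by the particle moved at step `t` of the `k`-min mob walk. -/
def minMoveTo (a : Env) {k : ℕ} (hk : k ≠ 0) (init : Fin k → ℤ) (t : ℕ) : ℤ :=
  (minMobState a hk init (t + 1)).1 (minIdx hk (minMobState a hk init t).1)

/-- Asymptotic local time of the `k`-min mob walk. -/
def minMobLocal (a : Env) {k : ℕ} (hk : k ≠ 0) (init : Fin k → ℤ) (x : ℤ) : ℕ∞ :=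
  ⨆ t, ((minMobState a hk init t).2 x : ℕ∞)

/-- `t` is earlier than the hitting time `t₋₁` of `-1` by the `k`-minimum walk started at `0`. -/
def beforeHit (a : Env) {k : ℕ} (hk : k ≠ 0) (t : ℕ) : Prop :=
  ∀ s ≤ t, minWalkPos a hk (fun _ => 0) s ≠ -1

/-- The quantity `w_n` (an extended natural number): `w_0 = k`, and for `n ≠ 0`,
`w_n = #{t < t₋₁ : X_t = n-1, X moved to ≠ n-2}` for the `k`-min mob walk started at `0`. -/
def wfun (a : Env) {k : ℕ} (hk : k ≠ 0) (n : ℤ) : ℕ∞ :=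
  if n = 0 then (k : ℕ∞) else
    ⨆ T, (((Finset.range T).filter fun t => beforeHit a hk t ∧
      minWalkPos a hk (fun _ => 0) t = n - 1 ∧
      minMoveTo a hk (fun _ => 0) t ≠ n - 2).card : ℕ∞)

/-- Number of left crossings of the edge `(n, n-1)` by the `k`-min mob walk (started at `0`)
among the first `T` steps. -/
def leftCrossUpTo (a : Env) {k : ℕ} (hk : k ≠ 0) (n : ℤ) (T : ℕ) : ℕ :=
  ((Finset.range T).filter fun t => minWalkPos a hk (fun _ => 0) t = n ∧
    minMoveTo a hk (fun _ => 0) t = n - 1).card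

/-- Total number of left crossings of the edge `(n, n-1)` by the `k`-min mob walk. -/
def leftCrossTotal (a : Env) {k : ℕ} (hk : k ≠ 0) (n : ℤ) : ℕ∞ :=
  ⨆ T, (leftCrossUpTo a hk n T : ℕ∞)

/-- Number of left arrows (i.e. values `≠ 1`) among `c 1, …, c t`. -/
def leftsUpTo (c : ℕ → ℤ) (t : ℕ) : ℕ := ((Finset.Icc 1 t).filter fun i => c i ≠ 1).card

/-- Number of right arrows (i.e. values `= 1`) among `c 1, …, c t`. -/
def rightsUpTo (c : ℕ → ℤ) (t : ℕ) : ℕ := ((Finset.Icc 1 t).filter fun i => c i = 1).card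

/-- The number of right arrows occurring in `c 1, c 2, …` before the `j`-th left arrow. -/
def rightsBeforeLefts (j : ℕ) (c : ℕ → ℤ) : ℕ := sInf {t | j ≤ leftsUpTo c t} - j

/-- The number of left arrows occurring in `c 1, c 2, …` before the `j`-th right arrow. -/
def leftsBeforeRights (j : ℕ) (c : ℕ → ℤ) : ℕ := sInf {t | j ≤ rightsUpTo c t} - j

/-- The backward process `z` associated to an arrow environment and `k` particles:
`z 0 = k` and `z (n+1)` is the number of right arrows in column `n` occurring before
`z n - (k-1)` left arrows when `z n ≥ k`, and `0` otherwise. -/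
def zProc (a : Env) (k : ℕ) : ℕ → ℕ
  | 0 => k
  | n + 1 =>
    if k ≤ zProc a k n then
      rightsBeforeLefts (zProc a k n - (k - 1)) (fun i => a (n : ℤ) i)
    else 0

/-- `a` is `k`-right transient with respect to the initial positions `init`:
all particles of the `k`-min mob walk tend to `+∞`. -/
def KRightTransientFrom (a : Env) {k : ℕ} (hk : k ≠ 0) (init : Fin k → ℤ) : Prop :=
  ∀ j : Fin k, Tendsto (fun t => (minMobState a hk init t).1 j) atTop atTop

/-- `a` is strongly `k`-right transient. -/
def StronglyKRightTransient (a : Env) {k : ℕ} (hk : k ≠ 0) : Prop :=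
  ∀ init : Fin k → ℤ, KRightTransientFrom a hk init

/-- The leftover environment of the `k`-mob walk with initial positions `init`. -/
def mobLO (a : Env) {k : ℕ} (hk : k ≠ 0) (init : Fin k → ℤ) : Env :=
  fun x n => a x (n + (minMobLocal a hk init x).toNat)

/-- Shift on arrow environments. -/
def envShift : Env → Env := fun a x n => a (x + 1) n

/-- Shift on cookie environments. -/
def cookieShift : CEnv → CEnv := fun ω x n => ω (x + 1) n

/-- Restriction of an arrow environment to the nonnegative sites. -/
def restNonneg : Env → (ℕ → ℕ → ℤ) := fun a n i => a (n : ℤ) i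

/-- Shift on one-sided environments. -/
def seqShift : (ℕ → ℕ → ℤ) → (ℕ → ℕ → ℤ) := fun b n i => b (n + 1) i

/-- The success probabilities for a bounded cookie stack `p` with `M` cookies per site
(fair coins afterwards). -/
def qOf (M : ℕ) (p : ℕ → ℝ) (i : ℕ) : ℝ := if 1 ≤ i ∧ i ≤ M then p i else 1 / 2

/-- The expected total drift per site `δ`. -/
def driftSum (M : ℕ) (p : ℕ → ℝ) : ℝ := ∑ i ∈ Finset.Icc 1 M, (2 * p i - 1)

/-- `μ` is the annealed measure on arrow environments corresponding to i.i.d. cookie stacks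
whose `i`-th cookie has strength `q i`: all arrows are independent and `a x i = 1` with
probability `q i`. -/
def IsAnnealedIID (μ : Measure Env) (q : ℕ → ℝ) : Prop :=
  ∀ (F : Finset (ℤ × ℕ)) (f : ℤ × ℕ → ℤ), (∀ pr ∈ F, f pr = 1 ∨ f pr = -1) →
    μ {a : Env | ∀ pr ∈ F, a pr.1 pr.2 = f pr} =
      ENNReal.ofReal (∏ pr ∈ F, if f pr = 1 then q pr.2 else 1 - q pr.2)

/-- `μc` is the law of a single column of arrows with independent entries, `= 1` with
probability `q i`. -/
def IsIIDCol (μc : Measure (ℕ → ℤ)) (q : ℕ → ℝ) : Prop :=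
  ∀ (F : Finset ℕ) (f : ℕ → ℤ), (∀ i ∈ F, f i = 1 ∨ f i = -1) →
    μc {c : ℕ → ℤ | ∀ i ∈ F, c i = f i} =
      ENNReal.ofReal (∏ i ∈ F, if f i = 1 then q i else 1 - q i)

/-- `μ` is the annealed measure on arrow environments induced by the cookie measure `P`:
given `ω`, the arrows are independent with `ℙ(a x i = 1) = ω x i`. -/
def IsAnnealedOf (P : Measure CEnv) (μ : Measure Env) : Prop :=
  ∀ (F : Finset (ℤ × ℕ)) (f : ℤ × ℕ → ℤ), (∀ pr ∈ F, f pr = 1 ∨ f pr = -1) →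
    μ {a : Env | ∀ pr ∈ F, a pr.1 pr.2 = f pr} =
      ∫⁻ ω, ∏ pr ∈ F,
        ENNReal.ofReal (if f pr = 1 then ω pr.1 pr.2 else 1 - ω pr.1 pr.2) ∂P

/-- Hitting time of site `x` by the walk started at `0` (junk value if never hit). -/
def hitTime (a : Env) (x : ℤ) : ℕ := sInf {t | walkX a 0 t = x}

namespace Stmt0Aux

variable (a : Env)

lemma walkL_succ (x : ℤ) (t : ℕ) :
    (walkState a 0 (t+1)).2 x =
      (walkState a 0 t).2 x + (if (walkState a 0 t).1 = x then 1 else 0) := by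
  show (Function.update (walkState a 0 t).2 (walkState a 0 t).1
      ((walkState a 0 t).2 (walkState a 0 t).1 + 1)) x = _
  rcases eq_or_ne (walkState a 0 t).1 x with h | h
  · subst h; simp [Function.update]
  · simp [Function.update, Ne.symm h, h]

lemma walkX_succ (t : ℕ) :
    walkX a 0 (t+1) = walkX a 0 t +
      a (walkX a 0 t) ((walkState a 0 t).2 (walkX a 0 t) + 1) := by
  show (walkState a 0 (t+1)).1 = _
  simp [walkState, walkX, Function.update]

lemma walkL_zero (x : ℤ) : (walkState a 0 0).2 x = 0 := rfl

lemma walkL_mono (x : ℤ) : Monotone fun t => (walkState a 0 t).2 x := by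
  apply monotone_nat_of_le_succ
  intro t
  rw [walkL_succ]
  split <;> omega

lemma walkL_le (x : ℤ) (t : ℕ) : (walkState a 0 t).2 x ≤ t := by
  induction t with
  | zero => simp [walkL_zero]
  | succ t ih => rw [walkL_succ]; split <;> omega

lemma unbdd_of_top {x : ℤ} (h : walkLocal a 0 x = ⊤) (n : ℕ) :
    ∃ t, n < (walkState a 0 t).2 x := by
  have := iSup_eq_top.1 h (n : ℕ∞) (by exact_mod_cast lt_top_iff_ne_top.2 (by simp))
  obtain ⟨t, ht⟩ := this
  exact ⟨t, by exact_mod_cast ht⟩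

/-- For each `n` there is a time at which the walk is at `x` with local time exactly `n`. -/
lemma attain {x : ℤ} (h : walkLocal a 0 x = ⊤) (n : ℕ) :
    ∃ t, walkX a 0 t = x ∧ (walkState a 0 t).2 x = n := by
  have hne : ∃ t, n < (walkState a 0 t).2 x := unbdd_of_top a h n
  classical
  let t0 := Nat.find hne
  have ht0 : n < (walkState a 0 t0).2 x := Nat.find_spec hne
  have ht0pos : t0 ≠ 0 := by
    intro h0
    rw [h0, walkL_zero] at ht0; omega
  obtain ⟨t, hteq⟩ : ∃ t, t0 = t + 1 := ⟨t0 - 1, by omega⟩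
  rw [hteq] at ht0
  have hlt : ¬ n < (walkState a 0 t).2 x := Nat.find_min hne (by omega)
  have hsucc := walkL_succ a x t
  refine ⟨t, ?_, ?_⟩
  · by_contra hx
    rw [hsucc, if_neg (show ¬(walkState a 0 t).1 = x from hx)] at ht0; omega
  · rw [hsucc] at ht0
    split at ht0 <;> omega

lemma top_of_vis {y : ℤ} (h : ∀ N, ∃ s, N ≤ s ∧ walkX a 0 s = y) :
    walkLocal a 0 y = ⊤ := by
  have key : ∀ n : ℕ, ∃ t, n ≤ (walkState a 0 t).2 y := by
    intro n
    induction n with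
    | zero => exact ⟨0, Nat.zero_le _⟩
    | succ n ih =>
      obtain ⟨t, ht⟩ := ih
      obtain ⟨s, hs, hsy⟩ := h t
      refine ⟨s + 1, ?_⟩
      have := walkL_succ a y s
      rw [this, if_pos (show (walkState a 0 s).1 = y from hsy)]
      have h2 : (walkState a 0 t).2 y ≤ (walkState a 0 s).2 y := walkL_mono a y hs
      omega
  rw [walkLocal, iSup_eq_top]
  intro b hb
  lift b to ℕ using hb.ne
  obtain ⟨t, ht⟩ := key (b + 1)
  exact ⟨t, by exact_mod_cast (by omega : b < (walkState a 0 t).2 y)⟩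

lemma vis_of_top {x : ℤ} (h : walkLocal a 0 x = ⊤) :
    ∀ N, ∃ s, N ≤ s ∧ walkX a 0 s = x := by
  intro N
  obtain ⟨t, hXt, hLt⟩ := attain a h N
  exact ⟨t, le_trans (hLt ▸ walkL_le a x t : N ≤ t) le_rfl, hXt⟩

lemma step (hA : IsArrow a) (hnd : NonDeg a) {x : ℤ} (h : walkLocal a 0 x = ⊤) :
    walkLocal a 0 (x + 1) = ⊤ ∧ walkLocal a 0 (x - 1) = ⊤ := by
  have key : ∀ (v : ℤ), (v = 1 ∨ v = -1) → ∀ N, ∃ s, N ≤ s ∧ walkX a 0 s = x + v := by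
    intro v hv N
    obtain ⟨n, hn, hne⟩ := hnd x (N + 1)
    have h1 := hA x n
    have h2 := hA x (n + 1)
    -- pick m ∈ {n, n+1} with a x m = v
    have hm : ∃ m, N + 1 ≤ m ∧ a x m = v := by
      rcases hv with rfl | rfl
      · rcases h1 with h1 | h1
        · exact ⟨n, hn, h1⟩
        · rcases h2 with h2 | h2
          · exact ⟨n + 1, by omega, h2⟩
          · exact absurd (h1.trans h2.symm) hne
      · rcases h1 with h1 | h1
        · rcases h2 with h2 | h2
          · exact absurd (h1.trans h2.symm) hne
          · exact ⟨n + 1, by omega, h2⟩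
        · exact ⟨n, hn, h1⟩
    obtain ⟨m, hmN, hma⟩ := hm
    obtain ⟨t, hXt, hLt⟩ := attain a h (m - 1)
    have htge : m - 1 ≤ t := hLt ▸ walkL_le a x t
    refine ⟨t + 1, by omega, ?_⟩
    rw [walkX_succ, hXt, hLt]
    have : m - 1 + 1 = m := by omega
    rw [this, hma]
  exact ⟨top_of_vis a (key 1 (Or.inl rfl)), top_of_vis a (key (-1) (Or.inr rfl))⟩

end Stmt0Aux

/-- For a non-degenerate arrow environment, if the asymptotic local time of
the walk is infinite at some site, then it is infinite at every site; consequently the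
asymptotic local time is either finite everywhere or infinite everywhere. -/
theorem infinite_localTime_everywhere_of_infinite_somewhere
    (a : Env) (hA : IsArrow a) (hnd : NonDeg a) :
    ((∃ x : ℤ, walkLocal a 0 x = ⊤) → ∀ y : ℤ, walkLocal a 0 y = ⊤) ∧
    ((∀ y : ℤ, walkLocal a 0 y < ⊤) ∨ (∀ y : ℤ, walkLocal a 0 y = ⊤)) := by
  have main : (∃ x : ℤ, walkLocal a 0 x = ⊤) → ∀ y : ℤ, walkLocal a 0 y = ⊤ := by
    rintro ⟨x, hx⟩ y
    have all : ∀ z : ℤ, walkLocal a 0 (x + z) = ⊤ := by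
      intro z
      induction z using Int.induction_on with
      | zero => simpa using hx
      | succ k ih =>
        have := (Stmt0Aux.step a hA hnd ih).1
        convert this using 2
        ring
      | pred k ih =>
        have := (Stmt0Aux.step a hA hnd ih).2
        convert this using 2
        ring
    have := all (y - x)
    simpa using this
  refine ⟨main, ?_⟩
  by_cases h : ∃ x : ℤ, walkLocal a 0 x = ⊤
  · exact Or.inr (main h)
  · exact Or.inl fun y => lt_top_iff_ne_top.2 fun hy => h ⟨y, hy⟩

end
end

section
/- A non-degenerate arrow environment a is transient (the asymptotic local time of the walk on a is finite at every site) if and only if the walk X_t on a satisfies lim_{t→∞} X_t = +∞ or lim_{t→∞} X_t = -∞. -/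
open MeasureTheory Filter

noncomputable section

attribute [local instance 10] Classical.propDecidable

-- aux lemmas
lemma aux_walkX_succ (a : Env) (t : ℕ) :
    walkX a 0 (t+1) = walkX a 0 t + a (walkX a 0 t) ((walkState a 0 t).2 (walkX a 0 t) + 1) := by
  simp [walkX, walkState]

lemma aux_walkL_succ (a : Env) (t : ℕ) (x : ℤ) :
    (walkState a 0 (t+1)).2 x =
      if x = walkX a 0 t then (walkState a 0 t).2 x + 1 else (walkState a 0 t).2 x := by
  show (Function.update (walkState a 0 t).2 (walkState a 0 t).1 _) x = _
  rw [Function.update_apply]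
  split <;> simp_all [walkX]

lemma aux_walkL_mono (a : Env) (x : ℤ) : Monotone fun t => (walkState a 0 t).2 x := by
  apply monotone_nat_of_le_succ
  intro t
  rw [aux_walkL_succ]
  split <;> omega

lemma aux_walkL_const (a : Env) (x : ℤ) (T : ℕ) (h : ∀ s, T ≤ s → walkX a 0 s ≠ x) :
    ∀ t, T ≤ t → (walkState a 0 t).2 x = (walkState a 0 T).2 x := by
  intro t ht
  induction t, ht using Nat.le_induction with
  | base => rfl
  | succ t ht ih =>
    rw [aux_walkL_succ, if_neg (fun hx => h t ht hx.symm), ih]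

lemma aux_eventually_ne (a : Env) (x : ℤ) (hfin : walkLocal a 0 x < ⊤) :
    ∃ T, ∀ t, T ≤ t → walkX a 0 t ≠ x := by
  by_contra h
  push_neg at h
  have key : ∀ n : ℕ, ∃ t, n ≤ (walkState a 0 t).2 x := by
    intro n
    induction n with
    | zero => exact ⟨0, Nat.zero_le _⟩
    | succ n ih =>
      obtain ⟨t, ht⟩ := ih
      obtain ⟨s, hs, hsx⟩ := h t
      refine ⟨s + 1, ?_⟩
      rw [aux_walkL_succ, if_pos hsx.symm]
      have := aux_walkL_mono a x hs
      simp only at this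
      omega
  obtain ⟨N, hN⟩ := (WithTop.lt_iff_exists_coe.mp hfin).imp (fun N h => h.1)
  have hle : ∀ t, ((walkState a 0 t).2 x : ℕ∞) ≤ (N : ℕ∞) := by
    intro t
    have := le_iSup (fun t => ((walkState a 0 t).2 x : ℕ∞)) t
    rw [← walkLocal] at this
    exact this.trans_eq hN
  obtain ⟨t, ht⟩ := key (N + 1)
  have := hle t
  rw [Nat.cast_le] at this
  omega

lemma aux_eventually_gt (a : Env) (htr : Transient a) (M : ℤ) :
    ∃ T, ∀ t, T ≤ t → M < |walkX a 0 t| := by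
  have H : ∀ x ∈ Finset.Icc (-M) M, ∃ T, ∀ t, T ≤ t → walkX a 0 t ≠ x :=
    fun x _ => aux_eventually_ne a x (htr x)
  choose! Tof hTof using H
  refine ⟨(Finset.Icc (-M) M).sup Tof, fun t ht => ?_⟩
  by_contra hc
  push_neg at hc
  have hmem : walkX a 0 t ∈ Finset.Icc (-M) M := by
    rw [Finset.mem_Icc]
    constructor <;> [skip; skip] <;> · have := abs_le.mp hc; omega
  exact hTof _ hmem t (le_trans (Finset.le_sup hmem) ht) rfl

lemma aux_step (a : Env) (hA : IsArrow a) (t : ℕ) :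
    walkX a 0 (t+1) = walkX a 0 t + 1 ∨ walkX a 0 (t+1) = walkX a 0 t - 1 := by
  rw [aux_walkX_succ]
  rcases hA (walkX a 0 t) ((walkState a 0 t).2 (walkX a 0 t) + 1) with h | h <;>
    rw [h] <;> [left; right] <;> ring

lemma aux_sign_pos (a : Env) (hA : IsArrow a) (T : ℕ) (h : ∀ t, T ≤ t → walkX a 0 t ≠ 0)
    (hT : 0 < walkX a 0 T) : ∀ t, T ≤ t → 0 < walkX a 0 t := by
  intro t ht
  induction t, ht using Nat.le_induction with
  | base => exact hT
  | succ t ht ih =>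
    rcases aux_step a hA t with hs | hs <;>
      · have := h (t+1) (by omega); omega

lemma aux_sign_neg (a : Env) (hA : IsArrow a) (T : ℕ) (h : ∀ t, T ≤ t → walkX a 0 t ≠ 0)
    (hT : walkX a 0 T < 0) : ∀ t, T ≤ t → walkX a 0 t < 0 := by
  intro t ht
  induction t, ht using Nat.le_induction with
  | base => exact hT
  | succ t ht ih =>
    rcases aux_step a hA t with hs | hs <;>
      · have := h (t+1) (by omega); omega

lemma aux_transient_of_ev_ne (a : Env) (h : ∀ x : ℤ, ∃ T, ∀ t, T ≤ t → walkX a 0 t ≠ x) :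
    Transient a := by
  intro x
  obtain ⟨T, hT⟩ := h x
  have hb : ∀ t, ((walkState a 0 t).2 x : ℕ∞) ≤ ((walkState a 0 T).2 x : ℕ∞) := by
    intro t
    rcases le_total t T with h' | h'
    · exact_mod_cast aux_walkL_mono a x h'
    · exact_mod_cast (aux_walkL_const a x T hT t h').le
  calc walkLocal a 0 x ≤ ((walkState a 0 T).2 x : ℕ∞) := iSup_le hb
    _ < ⊤ := by exact_mod_cast WithTop.coe_lt_top _


/-- A non-degenerate arrow environment is transient (finite asymptotic local
time everywhere) iff the walk on it tends to `+∞` or to `-∞`. -/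
theorem transient_iff_tendsto_atTop_or_atBot
    (a : Env) (hA : IsArrow a) (hnd : NonDeg a) :
    Transient a ↔
      (Tendsto (walkX a 0) atTop atTop ∨ Tendsto (walkX a 0) atTop atBot) := by
  constructor
  · intro htr
    obtain ⟨T, hT⟩ := aux_eventually_gt a htr 0
    have hne : ∀ t, T ≤ t → walkX a 0 t ≠ 0 := by
      intro t ht h0
      have := hT t ht
      rw [h0] at this
      simp at this
    rcases lt_or_gt_of_ne (hne T le_rfl) with hneg | hpos
    · right
      rw [tendsto_atTop_atBot]
      intro b
      obtain ⟨T', hT'⟩ := aux_eventually_gt a htr (|b| + 1)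
      refine ⟨max T T', fun t ht => ?_⟩
      have h1 := hT' t (le_trans (le_max_right _ _) ht)
      have h2 := aux_sign_neg a hA T hne hneg t (le_trans (le_max_left _ _) ht)
      rw [abs_of_neg h2] at h1
      have hb := neg_abs_le b
      omega
    · left
      rw [tendsto_atTop_atTop]
      intro b
      obtain ⟨T', hT'⟩ := aux_eventually_gt a htr (|b| + 1)
      refine ⟨max T T', fun t ht => ?_⟩
      have h1 := hT' t (le_trans (le_max_right _ _) ht)
      have h2 := aux_sign_pos a hA T hne hpos t (le_trans (le_max_left _ _) ht)
      rw [abs_of_pos h2] at h1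
      have hb := le_abs_self b
      omega
  · rintro (h | h) <;> apply aux_transient_of_ev_ne <;> intro x
    · obtain ⟨T, hT⟩ := (tendsto_atTop_atTop.mp h) (x + 1)
      exact ⟨T, fun t ht hx => by have := hT t ht; omega⟩
    · obtain ⟨T, hT⟩ := (tendsto_atTop_atBot.mp h) (x - 1)
      exact ⟨T, fun t ht hx => by have := hT t ht; omega⟩


end
end

section
/- Let a be a non-degenerate arrow environment and let S, S' be two proper k-schedulings. Then the asymptotic local times of the S-mob walk and the S'-mob walk on a coincide: L^{(S)}(x) = L^{(S')}(x) for every x ∈ ℤ (where both sides may equal ∞). -/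
open MeasureTheory Filter

noncomputable section

attribute [local instance 10] Classical.propDecidable

namespace MobAux

/-- Number of particles at site `x`. -/
def occ {k : ℕ} (P : Fin k → ℤ) (x : ℤ) : ℕ := (Finset.univ.filter fun j => P j = x).card

lemma occ_le {k : ℕ} (P : Fin k → ℤ) (x : ℤ) : occ P x ≤ k := by
  unfold occ
  exact (Finset.card_filter_le _ _).trans (by simp)

lemma occ_pos {k : ℕ} (P : Fin k → ℤ) (j : Fin k) : 1 ≤ occ P (P j) :=
  Finset.card_pos.mpr ⟨j, by simp⟩

lemma exists_of_occ_pos {k : ℕ} (P : Fin k → ℤ) (x : ℤ) (h : 1 ≤ occ P x) : ∃ j, P j = x := by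
  obtain ⟨j, hj⟩ := Finset.card_pos.mp h
  exact ⟨j, (Finset.mem_filter.mp hj).2⟩

lemma occ_update {k : ℕ} (P : Fin k → ℤ) (j : Fin k) (y x : ℤ) :
    occ (Function.update P j y) x + (if P j = x then 1 else 0)
      = occ P x + (if y = x then 1 else 0) := by
  have hrest : ∑ i ∈ Finset.univ.erase j, (if Function.update P j y i = x then 1 else 0)
      = ∑ i ∈ Finset.univ.erase j, (if P i = x then 1 else 0) := by
    refine Finset.sum_congr rfl fun i hi => ?_
    rw [Function.update_of_ne (Finset.ne_of_mem_erase hi)]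
  unfold occ
  rw [Finset.card_filter, Finset.card_filter,
    ← Finset.add_sum_erase _ _ (Finset.mem_univ j),
    ← Finset.add_sum_erase _ _ (Finset.mem_univ j), hrest, Function.update_self]
  omega

lemma rightsUpTo_succ (c : ℕ → ℤ) (m : ℕ) :
    rightsUpTo c (m+1) = rightsUpTo c m + (if c (m+1) = 1 then 1 else 0) := by
  unfold rightsUpTo
  rw [show Finset.Icc 1 (m+1) = insert (m+1) (Finset.Icc 1 m) by
    rw [← Finset.insert_Icc_right_eq_Icc_add_one (by omega)]]
  rw [Finset.filter_insert]
  split_ifs with h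
  · rw [Finset.card_insert_of_notMem (by simp)]
  · omega

lemma leftsUpTo_succ (c : ℕ → ℤ) (m : ℕ) :
    leftsUpTo c (m+1) = leftsUpTo c m + (if c (m+1) ≠ 1 then 1 else 0) := by
  unfold leftsUpTo
  rw [show Finset.Icc 1 (m+1) = insert (m+1) (Finset.Icc 1 m) by
    rw [← Finset.insert_Icc_right_eq_Icc_add_one (by omega)]]
  rw [Finset.filter_insert]
  split_ifs with h
  · rw [Finset.card_insert_of_notMem (by simp)]
  · omega

lemma rightsUpTo_mono (c : ℕ → ℤ) {m m' : ℕ} (h : m ≤ m') :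
    rightsUpTo c m ≤ rightsUpTo c m' :=
  Finset.card_le_card (Finset.filter_subset_filter _ (Finset.Icc_subset_Icc_right h))

lemma leftsUpTo_mono (c : ℕ → ℤ) {m m' : ℕ} (h : m ≤ m') :
    leftsUpTo c m ≤ leftsUpTo c m' :=
  Finset.card_le_card (Finset.filter_subset_filter _ (Finset.Icc_subset_Icc_right h))

lemma mobState_succ (a : Env) {k : ℕ} (S : ℕ → Fin k) (init : Fin k → ℤ) (t : ℕ) :
    mobState a S init (t+1) =
      (Function.update (mobState a S init t).1 (S t)
        ((mobState a S init t).1 (S t) +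
          a ((mobState a S init t).1 (S t))
            ((mobState a S init t).2 ((mobState a S init t).1 (S t)) + 1)),
       Function.update (mobState a S init t).2 ((mobState a S init t).1 (S t))
        ((mobState a S init t).2 ((mobState a S init t).1 (S t)) + 1)) := by
  simp only [mobState, Function.update_self]

end MobAux
namespace MobAux

lemma counter_step_le (a : Env) {k : ℕ} (S : ℕ → Fin k) (init : Fin k → ℤ) (t : ℕ) (x : ℤ) :
    (mobState a S init t).2 x ≤ (mobState a S init (t+1)).2 x := by
  rw [mobState_succ]
  dsimp only
  rcases eq_or_ne x ((mobState a S init t).1 (S t)) with h | h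
  · rw [h, Function.update_self]; omega
  · rw [Function.update_of_ne h]

lemma counter_mono (a : Env) {k : ℕ} (S : ℕ → Fin k) (init : Fin k → ℤ) {t t' : ℕ}
    (h : t ≤ t') (x : ℤ) : (mobState a S init t).2 x ≤ (mobState a S init t').2 x := by
  induction t' with
  | zero => exact le_of_eq (by rw [Nat.le_zero.mp h])
  | succ u ih =>
    rcases Nat.lt_succ_iff_lt_or_eq.mp (Nat.lt_succ_of_le h) with h' | h'
    · exact le_trans (ih (by omega)) (counter_step_le a S init u x)
    · rw [h']

lemma counter_zero (a : Env) {k : ℕ} (S : ℕ → Fin k) (init : Fin k → ℤ) (x : ℤ) :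
    (mobState a S init 0).2 x = 0 := rfl

lemma pos_stable (a : Env) {k : ℕ} (S : ℕ → Fin k) (init : Fin k → ℤ) (j : Fin k) (t' : ℕ) :
    ∀ d, (∀ w, w < d → S (t' + w) ≠ j) →
      (mobState a S init (t' + d)).1 j = (mobState a S init t').1 j := by
  intro d
  induction d with
  | zero => intro _; rfl
  | succ d ih =>
    intro h
    rw [show t' + (d+1) = (t' + d) + 1 from rfl, mobState_succ]
    dsimp only
    rw [Function.update_of_ne (Ne.symm (h d (by omega)))]
    exact ih fun w hw => h w (by omega)

/-- The occupancy identity. -/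
lemma occ_inv (a : Env) (hA : IsArrow a) {k : ℕ} (S : ℕ → Fin k) (init : Fin k → ℤ) :
    ∀ t x, occ ((mobState a S init t).1) x + (mobState a S init t).2 x
      = occ init x + rightsUpTo (a (x-1)) ((mobState a S init t).2 (x-1))
        + leftsUpTo (a (x+1)) ((mobState a S init t).2 (x+1)) := by
  intro t
  induction t with
  | zero => intro x; simp [mobState, rightsUpTo, leftsUpTo, occ]; congr 1
  | succ t ih =>
    intro x
    rw [mobState_succ]
    dsimp only
    set s := mobState a S init t with hs
    set p := s.1 (S t) with hp
    set m := s.2 p with hm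
    set e := a p (m + 1) with he'
    have he : e = 1 ∨ e = -1 := hA p (m+1)
    have hocc := occ_update s.1 (S t) (p + e) x
    rw [← hp] at hocc
    have ihx := ih x
    rcases eq_or_ne x p with rfl | hxp
    · -- x = p
      rw [Function.update_self,
        Function.update_of_ne (show p - 1 ≠ p by omega),
        Function.update_of_ne (show p + 1 ≠ p by omega)]
      have h1 : p + e ≠ p := by rcases he with h | h <;> omega
      rw [if_pos rfl, if_neg h1] at hocc
      omega
    · rw [Function.update_of_ne hxp]
      rw [if_neg (Ne.symm hxp)] at hocc
      rcases eq_or_ne x (p + 1) with hx1 | hxp1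
      · -- x = p + 1
        have h1 : x - 1 = p := by omega
        rw [h1, Function.update_self, rightsUpTo_succ,
          Function.update_of_ne (show x + 1 ≠ p by omega)]
        rw [h1, ← hm] at ihx
        have h2 : (if p + e = x then 1 else 0) = (if a p (m + 1) = 1 then 1 else 0) := by
          rw [← he']; rcases he with h | h <;> rw [h] <;> split_ifs <;> first | omega | exact (‹False›).elim
        
        rw [h2] at hocc
        omega
      · rcases eq_or_ne x (p - 1) with hx1 | hxm1
        · -- x = p - 1
          have h1 : x + 1 = p := by omega
          rw [h1, Function.update_self, leftsUpTo_succ,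
            Function.update_of_ne (show x - 1 ≠ p by omega)]
          rw [h1, ← hm] at ihx
          have h2 : (if p + e = x then 1 else 0) = (if a p (m + 1) ≠ 1 then 1 else 0) := by
            rw [← he']; rcases he with h | h <;> rw [h] <;> split_ifs <;> first | omega | exact (‹False›).elim
          rw [h2] at hocc
          omega
        · -- x far from p
          rw [Function.update_of_ne (show x - 1 ≠ p by omega),
            Function.update_of_ne (show x + 1 ≠ p by omega)]
          have h2 : (if p + e = x then 1 else 0) = 0 := by
            rcases he with h | h <;> rw [h] <;> split_ifs with hh <;> omega
          rw [h2] at hocc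
          omega

end MobAux
namespace MobAux

lemma counter_le_mobLocal (a : Env) {k : ℕ} (S : ℕ → Fin k) (init : Fin k → ℤ) (t : ℕ) (x : ℤ) :
    (((mobState a S init t).2 x : ℕ) : ℕ∞) ≤ mobLocal a S init x :=
  le_iSup (fun t => (((mobState a S init t).2 x : ℕ) : ℕ∞)) t

lemma mobLocal_le (a : Env) {k : ℕ} (S : ℕ → Fin k) (init : Fin k → ℤ) (x : ℤ) (B : ℕ)
    (h : ∀ t, (mobState a S init t).2 x ≤ B) : mobLocal a S init x ≤ (B : ℕ∞) :=
  iSup_le fun t => by exact_mod_cast h t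

lemma counter_le_of_eq (a : Env) {k : ℕ} (S : ℕ → Fin k) (init : Fin k → ℤ) {x : ℤ} {m : ℕ}
    (h : mobLocal a S init x = (m : ℕ∞)) : ∀ t, (mobState a S init t).2 x ≤ m := by
  intro t
  have h2 := counter_le_mobLocal a S init t x
  rw [h] at h2
  exact_mod_cast h2

lemma exists_counter_eq (a : Env) {k : ℕ} (S : ℕ → Fin k) (init : Fin k → ℤ) {x : ℤ} {m : ℕ}
    (h : mobLocal a S init x = (m : ℕ∞)) : ∃ t, (mobState a S init t).2 x = m := by
  by_contra hc
  push_neg at hc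
  have hb := counter_le_of_eq a S init h
  rcases Nat.eq_zero_or_pos m with h0 | h0
  · exact hc 0 (by rw [counter_zero, h0])
  · have h1 : mobLocal a S init x ≤ ((m - 1 : ℕ) : ℕ∞) :=
      mobLocal_le a S init x (m-1) fun t => by have := hb t; have := hc t; omega
    rw [h] at h1
    have : m ≤ m - 1 := by exact_mod_cast h1
    omega

lemma counter_unbounded (a : Env) {k : ℕ} (S : ℕ → Fin k) (init : Fin k → ℤ) {x : ℤ}
    (h : mobLocal a S init x = ⊤) (B : ℕ) : ∃ t, B ≤ (mobState a S init t).2 x := by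
  by_contra hc
  push_neg at hc
  have h1 : mobLocal a S init x ≤ (B : ℕ∞) := mobLocal_le a S init x B fun t => (hc t).le
  rw [h, top_le_iff] at h1
  exact (WithTop.natCast_ne_top B) h1

lemma exists_right_arrow (a : Env) (hA : IsArrow a) (hnd : NonDeg a) (x : ℤ) (N : ℕ) :
    ∃ i, N ≤ i ∧ a x i = 1 := by
  obtain ⟨n, hn1, hn2⟩ := hnd x N
  rcases hA x n with h | h
  · exact ⟨n, hn1, h⟩
  · rcases hA x (n+1) with h' | h'
    · exact ⟨n+1, by omega, h'⟩
    · exact absurd (h.trans h'.symm) hn2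

lemma exists_left_arrow (a : Env) (hA : IsArrow a) (hnd : NonDeg a) (x : ℤ) (N : ℕ) :
    ∃ i, N ≤ i ∧ a x i ≠ 1 := by
  obtain ⟨n, hn1, hn2⟩ := hnd x N
  rcases hA x n with h | h
  · rcases hA x (n+1) with h' | h'
    · exact absurd (h.trans h'.symm) hn2
    · exact ⟨n+1, by omega, by rw [h']; omega⟩
  · exact ⟨n, hn1, by rw [h]; omega⟩

lemma rights_unbounded (a : Env) (hA : IsArrow a) (hnd : NonDeg a) (x : ℤ) (B : ℕ) :
    ∃ M, B ≤ rightsUpTo (a x) M := by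
  induction B with
  | zero => exact ⟨0, Nat.zero_le _⟩
  | succ B ih =>
    obtain ⟨M, hM⟩ := ih
    obtain ⟨i, hi1, hi2⟩ := exists_right_arrow a hA hnd x (M+1)
    refine ⟨i, ?_⟩
    have h1 : rightsUpTo (a x) M + 1 ≤ rightsUpTo (a x) i := by
      unfold rightsUpTo
      rw [← Finset.card_insert_of_notMem (show i ∉ (Finset.Icc 1 M).filter fun j => a x j = 1 by
        simp only [Finset.mem_filter, Finset.mem_Icc]; omega)]
      refine Finset.card_le_card ?_
      intro j hj
      rcases Finset.mem_insert.mp hj with rfl | hj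
      · exact Finset.mem_filter.mpr ⟨Finset.mem_Icc.mpr ⟨by omega, le_refl _⟩, hi2⟩
      · have h := Finset.mem_filter.mp hj
        have h' := Finset.mem_Icc.mp h.1
        exact Finset.mem_filter.mpr ⟨Finset.mem_Icc.mpr ⟨h'.1, by omega⟩, h.2⟩
    omega

lemma lefts_unbounded (a : Env) (hA : IsArrow a) (hnd : NonDeg a) (x : ℤ) (B : ℕ) :
    ∃ M, B ≤ leftsUpTo (a x) M := by
  induction B with
  | zero => exact ⟨0, Nat.zero_le _⟩
  | succ B ih =>
    obtain ⟨M, hM⟩ := ih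
    obtain ⟨i, hi1, hi2⟩ := exists_left_arrow a hA hnd x (M+1)
    refine ⟨i, ?_⟩
    have h1 : leftsUpTo (a x) M + 1 ≤ leftsUpTo (a x) i := by
      unfold leftsUpTo
      rw [← Finset.card_insert_of_notMem (show i ∉ (Finset.Icc 1 M).filter fun j => a x j ≠ 1 by
        simp only [Finset.mem_filter, Finset.mem_Icc]; omega)]
      refine Finset.card_le_card ?_
      intro j hj
      rcases Finset.mem_insert.mp hj with rfl | hj
      · exact Finset.mem_filter.mpr ⟨Finset.mem_Icc.mpr ⟨by omega, le_refl _⟩, hi2⟩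
      · have h := Finset.mem_filter.mp hj
        have h' := Finset.mem_Icc.mp h.1
        exact Finset.mem_filter.mpr ⟨Finset.mem_Icc.mpr ⟨h'.1, by omega⟩, h.2⟩
    omega

end MobAux
namespace MobAux

/-- Least action principle: counters of any mob run are dominated by the asymptotic
local times of a run with a proper scheduling. -/
lemma counters_le (a : Env) (hA : IsArrow a) (hnd : NonDeg a) {k : ℕ} (S S' : ℕ → Fin k)
    (hS' : ProperSched S') (init : Fin k → ℤ) :
    ∀ (t : ℕ) (x : ℤ), (((mobState a S init t).2 x : ℕ) : ℕ∞) ≤ mobLocal a S' init x := by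
  intro t
  induction t with
  | zero =>
    intro x
    rw [counter_zero]
    exact zero_le
  | succ t ih =>
    intro x
    rw [mobState_succ]
    dsimp only
    set s := mobState a S init t with hs
    set p := s.1 (S t) with hp
    rcases eq_or_ne x p with rfl | hx
    swap
    · rw [Function.update_of_ne hx]; exact ih x
    rw [Function.update_self]
    by_contra hcon
    push_neg at hcon
    set m := s.2 p with hm
    -- the asymptotic local time of the S' run at p equals m
    have hne : mobLocal a S' init p ≠ ⊤ := by
      intro htop
      rw [htop] at hcon
      exact absurd hcon (by simp)
    set n := (mobLocal a S' init p).toNat with hndef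
    have hn : (n : ℕ∞) = mobLocal a S' init p := ENat.coe_toNat hne
    have h1 : (n : ℕ∞) < ((m + 1 : ℕ) : ℕ∞) := by rw [hn]; exact hcon
    have h2 : (m : ℕ∞) ≤ (n : ℕ∞) := by rw [hn]; exact ih p
    have hn1 : n < m + 1 := by exact_mod_cast h1
    have hn2 : m ≤ n := by exact_mod_cast h2
    have hnm : n = m := by omega
    have hLp : mobLocal a S' init p = (m : ℕ∞) := by rw [← hn, hnm]
    have hcle := counter_le_of_eq a S' init hLp
    -- neighbours have finite asymptotic local time in the S' run
    have hfinR : mobLocal a S' init (p+1) ≠ ⊤ := by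
      intro htop
      obtain ⟨M, hM⟩ := lefts_unbounded a hA hnd (p+1) (occ init p + k + m + 1)
      obtain ⟨u, hu⟩ := counter_unbounded a S' init htop M
      have hid := occ_inv a hA S' init u p
      have hb1 : occ ((mobState a S' init u).1) p ≤ k := occ_le _ _
      have hb2 : (mobState a S' init u).2 p ≤ m := hcle u
      have hb3 : leftsUpTo (a (p+1)) M ≤ leftsUpTo (a (p+1)) ((mobState a S' init u).2 (p+1)) :=
        leftsUpTo_mono _ hu
      omega
    have hfinL : mobLocal a S' init (p-1) ≠ ⊤ := by
      intro htop
      obtain ⟨M, hM⟩ := rights_unbounded a hA hnd (p-1) (occ init p + k + m + 1)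
      obtain ⟨u, hu⟩ := counter_unbounded a S' init htop M
      have hid := occ_inv a hA S' init u p
      have hb1 : occ ((mobState a S' init u).1) p ≤ k := occ_le _ _
      have hb2 : (mobState a S' init u).2 p ≤ m := hcle u
      have hb3 : rightsUpTo (a (p-1)) M ≤ rightsUpTo (a (p-1)) ((mobState a S' init u).2 (p-1)) :=
        rightsUpTo_mono _ hu
      omega
    set mL := (mobLocal a S' init (p-1)).toNat with hmLdef
    have hmL : (mL : ℕ∞) = mobLocal a S' init (p-1) := ENat.coe_toNat hfinL
    set mR := (mobLocal a S' init (p+1)).toNat with hmRdef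
    have hmR : (mR : ℕ∞) = mobLocal a S' init (p+1) := ENat.coe_toNat hfinR
    -- a time t' where the S' counters at p-1, p, p+1 have all attained their suprema
    obtain ⟨t1, ht1⟩ := exists_counter_eq a S' init hLp
    obtain ⟨t2, ht2⟩ := exists_counter_eq a S' init hmL.symm
    obtain ⟨t3, ht3⟩ := exists_counter_eq a S' init hmR.symm
    set t' := max t1 (max t2 t3) with ht'
    have hc'p : (mobState a S' init t').2 p = m :=
      le_antisymm (hcle t') (ht1 ▸ counter_mono a S' init (le_max_left _ _) p)
    have hc'L : (mobState a S' init t').2 (p-1) = mL :=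
      le_antisymm (counter_le_of_eq a S' init hmL.symm t')
        (ht2 ▸ counter_mono a S' init (le_trans (le_max_left _ _) (le_max_right _ _)) (p-1))
    have hc'R : (mobState a S' init t').2 (p+1) = mR :=
      le_antisymm (counter_le_of_eq a S' init hmR.symm t')
        (ht3 ▸ counter_mono a S' init (le_trans (le_max_right _ _) (le_max_right _ _)) (p+1))
    -- occupancy comparison: some particle sits at p at time t' in the S' run
    have hU := occ_inv a hA S init t p
    rw [← hs, ← hm] at hU
    have hV := occ_inv a hA S' init t' p
    rw [hc'p, hc'L, hc'R] at hV
    have hsL : s.2 (p-1) ≤ mL := by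
      have := ih (p-1); rw [← hmL] at this; exact_mod_cast this
    have hsR : s.2 (p+1) ≤ mR := by
      have := ih (p+1); rw [← hmR] at this; exact_mod_cast this
    have hmonoL : rightsUpTo (a (p-1)) (s.2 (p-1)) ≤ rightsUpTo (a (p-1)) mL :=
      rightsUpTo_mono _ hsL
    have hmonoR : leftsUpTo (a (p+1)) (s.2 (p+1)) ≤ leftsUpTo (a (p+1)) mR :=
      leftsUpTo_mono _ hsR
    have hoccU : 1 ≤ occ s.1 p := hp ▸ occ_pos s.1 (S t)
    have hoccV : 1 ≤ occ ((mobState a S' init t').1) p := by omega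
    obtain ⟨j, hj⟩ := exists_of_occ_pos _ _ hoccV
    -- j will eventually be scheduled while still at p, pushing the counter beyond m
    have hfind : ∃ u, t' ≤ u ∧ S' u = j := hS' j t'
    classical
    have hu := Nat.find_spec hfind
    set u := Nat.find hfind with hudef
    have hpos : (mobState a S' init u).1 j = p := by
      have hsplit : u = t' + (u - t') := by omega
      rw [hsplit, pos_stable a S' init j t' (u - t') ?_]
      · exact hj
      · intro w hw hSw
        exact Nat.find_min hfind (show t' + w < u by omega) ⟨by omega, hSw⟩
    have hstep : (mobState a S' init (u+1)).2 p = (mobState a S' init u).2 p + 1 := by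
      rw [mobState_succ]
      dsimp only
      rw [hu.2, hpos, Function.update_self]
    have hmono2 : m ≤ (mobState a S' init u).2 p :=
      hc'p ▸ counter_mono a S' init hu.1 p
    have := hcle (u+1)
    omega

end MobAux
/-- For a non-degenerate arrow environment and two proper `k`-schedulings,
the asymptotic local times of the corresponding mob walks (all particles started at `0`)
coincide at every site. -/
theorem mobLocal_eq_of_properSched
    (a : Env) (hA : IsArrow a) (hnd : NonDeg a) {k : ℕ}
    (S S' : ℕ → Fin k) (hS : ProperSched S) (hS' : ProperSched S') :
    ∀ x : ℤ, mobLocal a S (fun _ => 0) x = mobLocal a S' (fun _ => 0) x := by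
  intro x
  refine le_antisymm ?_ ?_
  · exact iSup_le fun t => MobAux.counters_le a hA hnd S S' hS' (fun _ => 0) t x
  · exact iSup_le fun t => MobAux.counters_le a hA hnd S' S hS (fun _ => 0) t x

end
end

section
/- Let a be a non-degenerate arrow environment, S a proper k-scheduling, and S' an arbitrary (not necessarily proper) k-scheduling. Then for every y ∈ ℤ, the asymptotic local time of the S'-mob walk satisfies L^{(S')}(y) ≤ L^{(S)}(y). -/
open MeasureTheory Filter

noncomputable section

attribute [local instance 10] Classical.propDecidable

namespace MobAux

variable (a : Env) {k : ℕ} (S : ℕ → Fin k) (init : Fin k → ℤ)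

/-- Positions at time `t`. -/
def P (t : ℕ) : Fin k → ℤ := (mobState a S init t).1
/-- Local times at time `t`. -/
def L (t : ℕ) (x : ℤ) : ℕ := (mobState a S init t).2 x
/-- Fired site at step `t`. -/
def fs (t : ℕ) : ℤ := P a S init t (S t)

lemma P_zero : P a S init 0 = init := rfl
lemma L_zero (x : ℤ) : L a S init 0 x = 0 := rfl

lemma P_succ (t : ℕ) : P a S init (t + 1) =
    Function.update (P a S init t) (S t)
      (fs a S init t + a (fs a S init t) (L a S init t (fs a S init t) + 1)) := by
  show (mobState a S init (t+1)).1 = _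
  rw [mobState]
  simp only [Function.update_self]
  rfl

lemma L_succ (t : ℕ) (x : ℤ) : L a S init (t + 1) x =
    if x = fs a S init t then L a S init t x + 1 else L a S init t x := by
  show (mobState a S init (t+1)).2 x = _
  rw [mobState]
  simp only [Function.update_apply]
  rcases eq_or_ne x (fs a S init t) with h | h
  · simp [h, fs, P, L]
  · simp [fs, P, L] at h ⊢
    simp [h]

lemma L_fired (t : ℕ) : L a S init (t + 1) (fs a S init t)
    = L a S init t (fs a S init t) + 1 := by simp [L_succ]

lemma L_le_succ (t : ℕ) (x : ℤ) : L a S init t x ≤ L a S init (t + 1) x := by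
  rw [L_succ]; split <;> omega

lemma L_mono (x : ℤ) : Monotone fun t => L a S init t x :=
  monotone_nat_of_le_succ fun t => L_le_succ a S init t x

/-- The new position of the fired particle. -/
lemma P_succ_fired (t : ℕ) : P a S init (t + 1) (S t) =
    fs a S init t + a (fs a S init t) (L a S init t (fs a S init t) + 1) := by
  rw [P_succ, Function.update_self]

lemma P_succ_other (t : ℕ) {j : Fin k} (h : j ≠ S t) :
    P a S init (t + 1) j = P a S init t j := by
  rw [P_succ, Function.update_of_ne h]

/-- If `m < L T z`, some step `u < T` is the `(m+1)`-st firing at `z`. -/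
lemma exists_firing {z : ℤ} : ∀ {T m : ℕ}, m < L a S init T z →
    ∃ u, u < T ∧ fs a S init u = z ∧ L a S init u z = m := by
  intro T
  induction T with
  | zero => intro m h; simp [L_zero] at h
  | succ T ih =>
    intro m h
    rcases lt_or_ge m (L a S init T z) with h' | h'
    · obtain ⟨u, hu, h1, h2⟩ := ih h'
      exact ⟨u, Nat.lt_succ_of_lt hu, h1, h2⟩
    · rw [L_succ] at h
      by_cases hz : z = fs a S init T
      · simp only [if_pos hz] at h
        have : m = L a S init T z := by omega
        exact ⟨T, Nat.lt_succ_self _, hz.symm, this.symm⟩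
      · simp only [if_neg hz] at h; omega

/-- Local time strictly increases along firings at the same site. -/
lemma L_lt_of_fired {s t : ℕ} (hst : s < t) {z : ℤ} (hz : fs a S init s = z) :
    L a S init s z < L a S init t z := by
  have h1 : L a S init (s + 1) z = L a S init s z + 1 := by rw [← hz]; exact L_fired a S init s
  have h2 : L a S init (s + 1) z ≤ L a S init t z := L_mono a S init z hst
  omega

/-- In-moves into `x` among the first `t` steps. -/
def Inc (t : ℕ) (x : ℤ) : ℕ :=
  ((Finset.range t).filter fun s => P a S init (s + 1) (S s) = x).card

/-- Token count at `x` at time `t`. -/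
def Tc (t : ℕ) (x : ℤ) : ℕ :=
  (Finset.univ.filter fun j : Fin k => P a S init t j = x).card

lemma Tc_succ (t : ℕ) (x : ℤ) :
    Tc a S init (t + 1) x + (if P a S init t (S t) = x then 1 else 0)
    = Tc a S init t x + (if P a S init (t + 1) (S t) = x then 1 else 0) := by
  classical
  have key : ∀ (f g : Fin k → ℤ), (∀ i, i ≠ S t → f i = g i) →
      (Finset.univ.filter fun j : Fin k => f j = x).card
        + (if g (S t) = x then 1 else 0)
      = (Finset.univ.filter fun j : Fin k => g j = x).card
        + (if f (S t) = x then 1 else 0) := by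
    intro f g hfg
    have hf : (Finset.univ.filter fun j : Fin k => f j = x).card
        = ∑ j : Fin k, (if f j = x then 1 else 0) := by
      rw [Finset.card_filter]
    have hg : (Finset.univ.filter fun j : Fin k => g j = x).card
        = ∑ j : Fin k, (if g j = x then 1 else 0) := by
      rw [Finset.card_filter]
    rw [hf, hg]
    rw [← Finset.sum_erase_add _ _ (Finset.mem_univ (S t)),
        ← Finset.sum_erase_add _ (fun j => if g j = x then 1 else 0) (Finset.mem_univ (S t))]
    have : ∑ j ∈ Finset.univ.erase (S t), (if f j = x then 1 else 0)
        = ∑ j ∈ Finset.univ.erase (S t), (if g j = x then 1 else 0) := by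
      apply Finset.sum_congr rfl
      intro j hj
      rw [hfg j (Finset.ne_of_mem_erase hj)]
    omega
  have := key (P a S init (t + 1)) (P a S init t)
    (fun i hi => P_succ_other a S init t hi)
  unfold Tc
  omega

lemma Inc_succ (t : ℕ) (x : ℤ) : Inc a S init (t + 1) x
    = Inc a S init t x + (if P a S init (t + 1) (S t) = x then 1 else 0) := by
  unfold Inc
  rw [Finset.range_add_one, Finset.filter_insert]
  split <;> simp [Finset.card_insert_of_notMem, *]

/-- Token conservation. -/
lemma Tc_add_L (t : ℕ) (x : ℤ) :
    Tc a S init t x + L a S init t x = Tc a S init 0 x + Inc a S init t x := by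
  induction t with
  | zero => simp [L_zero, Inc]
  | succ t ih =>
    have h1 := Tc_succ a S init t x
    have h2 := Inc_succ a S init t x
    have h3 : L a S init (t + 1) x
        = L a S init t x + (if P a S init t (S t) = x then 1 else 0) := by
      rw [L_succ]
      rcases eq_or_ne x (fs a S init t) with h | h
      · simp [if_pos h, fs] at *
        simp [h, fs]
      · rw [if_neg h]
        have : ¬ (P a S init t (S t) = x) := fun hh => h (by simp [fs, hh])
        simp [this]
    omega

end MobAux

namespace MobAux

variable (a : Env) {k : ℕ} (S S' : ℕ → Fin k) (init : Fin k → ℤ)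

/-- Comparison of in-moves between two runs. -/
lemma Inc_le {t T : ℕ} (x : ℤ)
    (hT : ∀ s, s < t → L a S' init s (fs a S' init s) < L a S init T (fs a S' init s)) :
    Inc a S' init t x ≤ Inc a S init T x := by
  classical
  unfold Inc
  set Q : ℕ → ℕ → Prop := fun s u => u < T ∧ fs a S init u = fs a S' init s ∧
    L a S init u (fs a S' init s) = L a S' init s (fs a S' init s) with hQ
  have hex : ∀ s, s < t → ∃ u, Q s u := by
    intro s hs
    obtain ⟨u, hu1, hu2, hu3⟩ := exists_firing a S init (hT s hs)
    exact ⟨u, hu1, hu2, hu3⟩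
  set φ : ℕ → ℕ := fun s => if h : ∃ u, Q s u then Nat.find h else 0 with hφ
  have hspec : ∀ s, s < t → Q s (φ s) := by
    intro s hs
    have h := hex s hs
    simp only [hφ, dif_pos h]
    exact Nat.find_spec h
  apply Finset.card_le_card_of_injOn φ
  · intro s hs
    simp only [Finset.coe_filter, Finset.mem_coe, Finset.mem_filter, Finset.mem_range, Set.mem_setOf_eq] at hs ⊢
    obtain ⟨hu1, hu2, hu3⟩ := hspec s hs.1
    refine ⟨hu1, ?_⟩
    rw [P_succ_fired a S init (φ s), hu2, hu3, ← P_succ_fired a S' init s]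
    exact hs.2
  · intro s1 h1 s2 h2 heq
    simp only [Finset.coe_filter, Finset.mem_range, Set.mem_setOf_eq] at h1 h2
    obtain ⟨hu1, hu2, hu3⟩ := hspec s1 h1.1
    obtain ⟨hv1, hv2, hv3⟩ := hspec s2 h2.1
    by_contra hne
    have hzz : fs a S' init s1 = fs a S' init s2 := by rw [← hu2, heq, hv2]
    have hLL : L a S' init s1 (fs a S' init s1) = L a S' init s2 (fs a S' init s1) := by
      rw [← hu3, heq, hzz, hv3]
    rcases Nat.lt_or_ge s1 s2 with h | h
    · exact absurd hLL (Nat.ne_of_lt (L_lt_of_fired a S' init h rfl))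
    · have h' : s2 < s1 := lt_of_le_of_ne h (fun he => hne he.symm)
      exact absurd hLL.symm (Nat.ne_of_lt (hzz ▸ L_lt_of_fired a S' init h' rfl))

/-- A particle at a site whose local time is maxed out never moves again. -/
lemma frozen {x : ℤ} {m T : ℕ} {j : Fin k}
    (hbound : ∀ u, L a S init u x ≤ m) (hTx : L a S init T x = m)
    (hj : P a S init T j = x) : ∀ d, P a S init (T + d) j = x := by
  intro d
  induction d with
  | zero => exact hj
  | succ d ih =>
    by_cases h : j = S (T + d)
    · exfalso
      have hfs : fs a S init (T + d) = x := by rw [fs, ← h, ih]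
      have h1 : L a S init (T + d + 1) x = L a S init (T + d) x + 1 := by
        rw [← hfs]; exact L_fired a S init (T + d)
      have h2 : m ≤ L a S init (T + d) x := hTx ▸ L_mono a S init x (Nat.le_add_right T d)
      have h3 := hbound (T + d + 1)
      omega
    · rw [show T + (d + 1) = (T + d) + 1 from rfl, P_succ_other a S init (T + d) h, ih]

/-- If the local time at `x` is maxed out at `m` and a token sits at `x`,
a proper schedule yields a contradiction. -/
lemma no_token {x : ℤ} {m T : ℕ} {j : Fin k} (hS : ProperSched S)
    (hbound : ∀ u, L a S init u x ≤ m) (hTx : L a S init T x = m)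
    (hj : P a S init T j = x) : False := by
  obtain ⟨s, hs1, hs2⟩ := hS j T
  have hP : P a S init s j = x := by
    have := frozen a S init hbound hTx hj (s - T)
    rwa [Nat.add_sub_cancel' hs1] at this
  have hfs : fs a S init s = x := by rw [fs, hs2, hP]
  have h1 : L a S init (s + 1) x = L a S init s x + 1 := by
    rw [← hfs]; exact L_fired a S init s
  have h2 : m ≤ L a S init s x := hTx ▸ L_mono a S init x hs1
  have h3 := hbound (s + 1)
  omega

lemma main (hS : ProperSched S) :
    ∀ t y, (L a S' init t y : ℕ∞) ≤ mobLocal a S init y := by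
  intro t
  induction t using Nat.strong_induction_on with
  | _ t IH =>
    match t with
    | 0 =>
      intro y
      simp only [L_zero, Nat.cast_zero]
      exact zero_le
    | Nat.succ t =>
      intro y
      by_cases hy : y = fs a S' init t
      · subst hy
        rw [L_fired]
        by_cases htop : mobLocal a S init (fs a S' init t) = ⊤
        · rw [htop]; exact le_top
        · set x := fs a S' init t with hx
          set m := (mobLocal a S init x).toNat with hmdef
          have hm : mobLocal a S init x = (m : ℕ∞) := (ENat.coe_toNat htop).symm
          have hbound : ∀ u, L a S init u x ≤ m := by
            intro u
            have h1 : (L a S init u x : ℕ∞) ≤ mobLocal a S init x :=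
              le_iSup (fun u => ((mobState a S init u).2 x : ℕ∞)) u
            rw [hm] at h1
            exact_mod_cast h1
          have hIH : L a S' init t x ≤ m := by
            have h1 := IH t (Nat.lt_succ_self t) x
            rw [hm] at h1
            exact_mod_cast h1
          rcases lt_or_eq_of_le hIH with hlt | heqm
          · rw [hm]
            exact_mod_cast Nat.succ_le_of_lt hlt
          · exfalso
            -- build the single comparison time
            have hcomp : ∀ s, ∃ T, s < t → L a S' init s (fs a S' init s)
                < L a S init T (fs a S' init s) := by
              intro s
              by_cases hs : s < t
              · set z := fs a S' init s with hz
                have h1 : (L a S' init (s + 1) z : ℕ∞) ≤ mobLocal a S init z :=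
                  IH (s + 1) (Nat.succ_lt_succ hs) z
                rw [L_fired] at h1
                have h2 : (L a S' init s z : ℕ∞) < mobLocal a S init z :=
                  lt_of_lt_of_le (by exact_mod_cast Nat.lt_succ_self _) h1
                rw [mobLocal, lt_iSup_iff] at h2
                obtain ⟨T, hT⟩ := h2
                exact ⟨T, fun _ => by exact_mod_cast hT⟩
              · exact ⟨0, fun h => absurd h hs⟩
            choose Tof hTof using hcomp
            -- time where local time at x reaches m
            have hT2 : ∃ T2, L a S init T2 x = m := by
              rcases Nat.eq_zero_or_pos m with h0 | hpos
              · exact ⟨0, by rw [L_zero, h0]⟩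
              · have h1 : ((m - 1 : ℕ) : ℕ∞) < mobLocal a S init x := by
                  rw [hm]
                  exact_mod_cast Nat.sub_lt hpos one_pos
                rw [mobLocal, lt_iSup_iff] at h1
                obtain ⟨T, hT⟩ := h1
                have h2 : m - 1 < L a S init T x := by exact_mod_cast hT
                exact ⟨T, le_antisymm (hbound T) (by omega)⟩
            obtain ⟨T2, hT2⟩ := hT2
            set T := max ((Finset.range t).sup Tof) T2 with hTdef
            have hTx : L a S init T x = m :=
              le_antisymm (hbound T) (hT2 ▸ L_mono a S init x (le_max_right _ _))
            have hTall : ∀ s, s < t → L a S' init s (fs a S' init s)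
                < L a S init T (fs a S' init s) := by
              intro s hs
              refine lt_of_lt_of_le (hTof s hs) (L_mono a S init _ ?_)
              exact le_trans (Finset.le_sup (Finset.mem_range.mpr hs)) (le_max_left _ _)
            have hInc : Inc a S' init t x ≤ Inc a S init T x :=
              Inc_le a S S' init x hTall
            have hTc0 : Tc a S init 0 x = Tc a S' init 0 x := rfl
            have hid1 := Tc_add_L a S' init t x
            have hid2 := Tc_add_L a S init T x
            have htok : 1 ≤ Tc a S' init t x := by
              refine Finset.card_pos.mpr ⟨S' t, ?_⟩
              simp only [Finset.mem_filter, Finset.mem_univ, true_and]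
              exact hx.symm
            have htokS : 1 ≤ Tc a S init T x := by omega
            obtain ⟨j', hj'⟩ := Finset.card_pos.mp htokS
            simp only [Finset.mem_filter, Finset.mem_univ, true_and] at hj'
            exact no_token a S init hS hbound hTx hj'
      · rw [L_succ, if_neg hy]
        exact IH t (Nat.lt_succ_self t) y

end MobAux

/-- For a non-degenerate arrow environment, a proper `k`-scheduling `S` and
an arbitrary `k`-scheduling `S'`, the asymptotic local time of the `S'`-mob walk is bounded
by that of the `S`-mob walk. -/
theorem mobLocal_le_of_properSched
    (a : Env) (hA : IsArrow a) (hnd : NonDeg a) {k : ℕ}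
    (S S' : ℕ → Fin k) (hS : ProperSched S) :
    ∀ y : ℤ, mobLocal a S' (fun _ => 0) y ≤ mobLocal a S (fun _ => 0) y := by
  intro y
  exact iSup_le fun t => MobAux.main a S S' (fun _ => 0) hS t y

end
end

section
/- A non-degenerate arrow environment a is k-right transient if and only if the k-minimum walk on a is transient to the right (i.e., the position of the leftmost particle under the minimal scheduling tends to +∞). -/
open MeasureTheory Filter

noncomputable section

attribute [local instance 10] Classical.propDecidable

namespace KRT

def ind (y : ℤ) : ℤ := if y = 0 then 1 else 0

def rhoN (a : Env) (x : ℤ) (n : ℕ) : ℕ := ((Finset.Icc 1 n).filter fun i => a x i = 1).card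

def lamN (a : Env) (x : ℤ) (n : ℕ) : ℕ := ((Finset.Icc 1 n).filter fun i => ¬ a x i = 1).card

lemma rhoN_zero (a : Env) (x : ℤ) : rhoN a x 0 = 0 := by simp [rhoN]

lemma lamN_zero (a : Env) (x : ℤ) : lamN a x 0 = 0 := by simp [lamN]

lemma rhoN_succ (a : Env) (x : ℤ) (n : ℕ) :
    rhoN a x (n + 1) = rhoN a x n + (if a x (n + 1) = 1 then 1 else 0) := by
  unfold rhoN
  rw [show Finset.Icc 1 (n + 1) = insert (n + 1) (Finset.Icc 1 n) by
    ext i; simp [Finset.mem_Icc, Finset.mem_insert]; omega]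
  rw [Finset.filter_insert]
  split_ifs with h
  · rw [Finset.card_insert_of_notMem (by simp)]
  · simp

lemma lamN_succ (a : Env) (x : ℤ) (n : ℕ) :
    lamN a x (n + 1) = lamN a x n + (if a x (n + 1) = 1 then 0 else 1) := by
  unfold lamN
  rw [show Finset.Icc 1 (n + 1) = insert (n + 1) (Finset.Icc 1 n) by
    ext i; simp [Finset.mem_Icc, Finset.mem_insert]; omega]
  rw [Finset.filter_insert]
  split_ifs with h
  · simp
  · rw [Finset.card_insert_of_notMem (by simp)]

lemma rhoN_mono (a : Env) (x : ℤ) {m n : ℕ} (h : m ≤ n) : rhoN a x m ≤ rhoN a x n :=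
  Finset.card_le_card (Finset.filter_subset_filter _ (Finset.Icc_subset_Icc_right h))

lemma lamN_mono (a : Env) (x : ℤ) {m n : ℕ} (h : m ≤ n) : lamN a x m ≤ lamN a x n :=
  Finset.card_le_card (Finset.filter_subset_filter _ (Finset.Icc_subset_Icc_right h))

lemma rhoN_offset (a b : Env) (x : ℤ) (s : ℕ) (hb : ∀ i, b x i = a x (i + s)) :
    ∀ n, rhoN a x s + rhoN b x n = rhoN a x (s + n) := by
  intro n
  induction n with
  | zero => simp [rhoN_zero]
  | succ n ih =>
    rw [rhoN_succ, show s + (n + 1) = (s + n) + 1 by omega, rhoN_succ, ← ih, hb (n + 1),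
      show n + 1 + s = s + n + 1 by omega]
    ring

lemma lamN_offset (a b : Env) (x : ℤ) (s : ℕ) (hb : ∀ i, b x i = a x (i + s)) :
    ∀ n, lamN a x s + lamN b x n = lamN a x (s + n) := by
  intro n
  induction n with
  | zero => simp [lamN_zero]
  | succ n ih =>
    rw [lamN_succ, show s + (n + 1) = (s + n) + 1 by omega, lamN_succ, ← ih, hb (n + 1),
      show n + 1 + s = s + n + 1 by omega]
    ring

end KRT
namespace KRT

lemma minIdx_le {k : ℕ} (hk : k ≠ 0) (X : Fin k → ℤ) (i : Fin k) : X (minIdx hk X) ≤ X i := by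
  have h : minIdx hk X ∈ Finset.univ.filter fun j => ∀ i, X j ≤ X i := Finset.min'_mem _ _
  exact (Finset.mem_filter.mp h).2 i

section
variable (a : Env) {k : ℕ} (hk : k ≠ 0) (init : Fin k → ℤ)

lemma mob_snd_succ (t : ℕ) :
    (minMobState a hk init (t + 1)).2
      = Function.update (minMobState a hk init t).2 (minWalkPos a hk init t)
          ((minMobState a hk init t).2 (minWalkPos a hk init t) + 1) := rfl

lemma mob_fst_succ (t : ℕ) :
    (minMobState a hk init (t + 1)).1
      = Function.update (minMobState a hk init t).1 (minIdx hk (minMobState a hk init t).1)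
          (minWalkPos a hk init t
            + a (minWalkPos a hk init t)
                ((minMobState a hk init t).2 (minWalkPos a hk init t) + 1)) := by
  show Function.update _ _ _ = _
  simp only [minMobState, minWalkPos, Function.update_self]

lemma mob_snd_zero : (minMobState a hk init 0).2 = fun _ => 0 := rfl

lemma mL_succ (t : ℕ) (x : ℤ) :
    (minMobState a hk init (t + 1)).2 x
      = (minMobState a hk init t).2 x + if x = minWalkPos a hk init t then 1 else 0 := by
  rw [mob_snd_succ, Function.update_apply]
  split_ifs with h
  · rw [h]
  · rfl

lemma mL_mono (x : ℤ) : Monotone fun t => (minMobState a hk init t).2 x := by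
  apply monotone_nat_of_le_succ
  intro t
  rw [mL_succ]
  split_ifs <;> omega

end

lemma card_filter_update {k : ℕ} (f : Fin k → ℤ) (j0 : Fin k) (v : ℤ) (y : ℤ) :
    ((Finset.univ.filter fun j => Function.update f j0 v j = y).card : ℤ)
      = ((Finset.univ.filter fun j => f j = y).card : ℤ)
        + (if v = y then 1 else 0) - (if f j0 = y then 1 else 0) := by
  have h1 : ∀ (g : Fin k → ℤ),
      (((Finset.univ.filter fun j => g j = y).card : ℤ))
        = ∑ j : Fin k, (if g j = y then (1 : ℤ) else 0) := by
    intro g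
    rw [Finset.card_filter]
    push_cast
    rfl
  rw [h1, h1]
  have h2 : ∀ j, (if Function.update f j0 v j = y then (1 : ℤ) else 0)
      = Function.update (fun j => if f j = y then (1 : ℤ) else 0) j0
          (if v = y then 1 else 0) j := by
    intro j
    by_cases h : j = j0
    · subst h; simp
    · simp [Function.update_of_ne h]
  rw [Finset.sum_congr rfl fun j _ => h2 j, Finset.sum_update_of_mem (Finset.mem_univ _),
    Finset.sdiff_singleton_eq_erase, Finset.sum_erase_eq_sub (Finset.mem_univ _)]
  ring

end KRT
namespace KRT

lemma mobINV (a : Env) (hA : IsArrow a) {k : ℕ} (hk : k ≠ 0) :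
    ∀ t y, ((Finset.univ.filter fun j => (minMobState a hk (fun _ => 0) t).1 j = y).card : ℤ)
      = (k : ℤ) * ind y
        + (rhoN a (y - 1) ((minMobState a hk (fun _ => 0) t).2 (y - 1)) : ℤ)
        + (lamN a (y + 1) ((minMobState a hk (fun _ => 0) t).2 (y + 1)) : ℤ)
        - ((minMobState a hk (fun _ => 0) t).2 y : ℤ) := by
  intro t
  induction t with
  | zero =>
    intro y
    show ((Finset.univ.filter fun j : Fin k => (0 : ℤ) = y).card : ℤ) = _
    by_cases hy : y = 0
    · subst hy
      simp [minMobState, ind, rhoN_zero, lamN_zero]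
    · rw [Finset.filter_false_of_mem (fun j _ h => hy h.symm)]
      simp [minMobState, ind, hy, rhoN_zero, lamN_zero]
  | succ t ih =>
    intro y
    have hp : (minMobState a hk (fun _ => 0) t).1 (minIdx hk (minMobState a hk (fun _ => 0) t).1)
        = minWalkPos a hk (fun _ => 0) t := rfl
    set s := minMobState a hk (fun _ => 0) t with hs
    set p := minWalkPos a hk (fun _ => 0) t with hpdef
    have hL : ∀ z, (minMobState a hk (fun _ => 0) (t + 1)).2 z
        = s.2 z + if z = p then 1 else 0 := fun z => mL_succ a hk _ t z
    rw [mob_fst_succ, card_filter_update, hp, hL, hL, hL]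
    have ihy := ih y
    rcases hA p (s.2 p + 1) with h1 | h1 <;> rw [h1] <;>
      [skip; skip] <;> [
      (by_cases e1 : y - 1 = p
       · rw [if_pos e1, if_neg (show ¬ y + 1 = p by omega), add_zero,
           if_neg (show ¬ y = p by omega), add_zero,
           if_pos (show p + (1 : ℤ) = y by omega), if_neg (show ¬ p = y by omega)]
         rw [e1] at ihy ⊢
         rw [rhoN_succ, h1, if_pos rfl, ihy]
         push_cast; ring
       · by_cases e2 : y + 1 = p
         · rw [if_neg e1, add_zero, if_pos e2, if_neg (show ¬ y = p by omega), add_zero,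
             if_neg (show ¬ p + (1 : ℤ) = y by omega), if_neg (show ¬ p = y by omega)]
           rw [e2] at ihy ⊢
           rw [lamN_succ, h1, if_pos rfl, add_zero, ihy]
           push_cast; ring
         · by_cases e3 : y = p
           · rw [if_neg e1, add_zero, if_neg e2, add_zero, if_pos e3,
               if_neg (show ¬ p + (1 : ℤ) = y by omega), if_pos e3.symm, ihy]
             push_cast; ring
           · rw [if_neg e1, add_zero, if_neg e2, add_zero, if_neg e3, add_zero,
               if_neg (show ¬ p + (1 : ℤ) = y by omega), if_neg (fun h => e3 h.symm), ihy]
             push_cast; ring);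
      (by_cases e1 : y - 1 = p
       · rw [if_pos e1, if_neg (show ¬ y + 1 = p by omega), add_zero,
           if_neg (show ¬ y = p by omega), add_zero,
           if_neg (show ¬ p + (-1 : ℤ) = y by omega), if_neg (show ¬ p = y by omega)]
         rw [e1] at ihy ⊢
         rw [rhoN_succ, h1, if_neg (by norm_num), add_zero, ihy]
         push_cast; ring
       · by_cases e2 : y + 1 = p
         · rw [if_neg e1, add_zero, if_pos e2, if_neg (show ¬ y = p by omega), add_zero,
             if_pos (show p + (-1 : ℤ) = y by omega), if_neg (show ¬ p = y by omega)]
           rw [e2] at ihy ⊢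
           rw [lamN_succ, h1, if_neg (by norm_num), ihy]
           push_cast; ring
         · by_cases e3 : y = p
           · rw [if_neg e1, add_zero, if_neg e2, add_zero, if_pos e3,
               if_neg (show ¬ p + (-1 : ℤ) = y by omega), if_pos e3.symm, ihy]
             push_cast; ring
           · rw [if_neg e1, add_zero, if_neg e2, add_zero, if_neg e3, add_zero,
               if_neg (show ¬ p + (-1 : ℤ) = y by omega), if_neg (fun h => e3 h.symm), ihy]
             push_cast; ring)]

end KRT
namespace KRT

lemma leastAction (a : Env) (hA : IsArrow a) {κ k j : ℕ} (hκ : κ ≠ 0) (hjk : j + κ ≤ k)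
    (Λ U : ℤ → ℕ) (b : Env) (hb : ∀ x n, b x n = a x (n + Λ x))
    (hΛ : ∀ y, (j : ℤ) * ind y + (rhoN a (y - 1) (Λ (y - 1)) : ℤ)
      + (lamN a (y + 1) (Λ (y + 1)) : ℤ) = (Λ y : ℤ))
    (hU : ∀ y, (k : ℤ) * ind y + (rhoN a (y - 1) (U (y - 1)) : ℤ)
      + (lamN a (y + 1) (U (y + 1)) : ℤ) = (U y : ℤ))
    (hΛU : ∀ x, Λ x ≤ U x) :
    ∀ t x, Λ x + (minMobState b hκ (fun _ => 0) t).2 x ≤ U x := by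
  have hAb : IsArrow b := fun x n => by rw [hb]; exact hA _ _
  intro t
  induction t with
  | zero => intro x; simpa [minMobState] using hΛU x
  | succ t ih =>
    intro x
    rw [mL_succ]
    split_ifs with hx
    · have ihx := ih x
      rcases lt_or_eq_of_le ihx with hlt | heq
      · omega
      · exfalso
        have hocc : 1 ≤ ((Finset.univ.filter
            fun j => (minMobState b hκ (fun _ => 0) t).1 j = x).card) := by
          apply Finset.card_pos.mpr
          exact ⟨minIdx hκ (minMobState b hκ (fun _ => 0) t).1,
            Finset.mem_filter.mpr ⟨Finset.mem_univ _, by rw [hx]; rfl⟩⟩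
        have hcard : (1 : ℤ) ≤ ((Finset.univ.filter
            fun j => (minMobState b hκ (fun _ => 0) t).1 j = x).card : ℤ) := by
          exact_mod_cast hocc
        rw [mobINV b hAb hκ t x] at hcard
        have hρeq := rhoN_offset a b (x - 1) (Λ (x - 1)) (fun i => hb (x - 1) i)
          ((minMobState b hκ (fun _ => 0) t).2 (x - 1))
        have hl_eq := lamN_offset a b (x + 1) (Λ (x + 1)) (fun i => hb (x + 1) i)
          ((minMobState b hκ (fun _ => 0) t).2 (x + 1))
        have m1 : rhoN a (x - 1) (Λ (x - 1) + (minMobState b hκ (fun _ => 0) t).2 (x - 1))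
            ≤ rhoN a (x - 1) (U (x - 1)) := rhoN_mono a _ (ih (x - 1))
        have m2 : lamN a (x + 1) (Λ (x + 1) + (minMobState b hκ (fun _ => 0) t).2 (x + 1))
            ≤ lamN a (x + 1) (U (x + 1)) := lamN_mono a _ (ih (x + 1))
        have hΛx := hΛ x
        have hUx := hU x
        by_cases hx0 : x = 0
        · subst hx0
          rw [show ind 0 = 1 by simp [ind]] at hΛx hUx hcard
          rw [mul_one] at hΛx hUx hcard
          omega
        · rw [show ind x = 0 by simp [ind, hx0]] at hΛx hUx hcard
          rw [mul_zero] at hΛx hUx hcard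
          omega
    · have := ih x
      omega

end KRT
namespace KRT

lemma fire_tendsto (f : ℕ → ℤ) (Lt : ℕ → ℤ → ℕ) (U : ℤ → ℕ) (m : ℤ)
    (hstep : ∀ t x, Lt (t + 1) x = Lt t x + if x = f t then 1 else 0)
    (hle : ∀ t x, Lt t x ≤ U x)
    (hf : ∀ t, m ≤ f t) :
    Tendsto f atTop atTop := by
  have hmono : ∀ x, Monotone fun t => Lt t x := fun x =>
    monotone_nat_of_le_succ fun t => by rw [hstep]; split_ifs <;> omega
  rw [tendsto_atTop]
  intro b
  suffices h : {t | ¬ b ≤ f t}.Finite by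
    have := Filter.eventually_cofinite.mpr h
    rwa [Nat.cofinite_eq_atTop] at this
  set N := (Finset.Icc m b).sup U with hN
  have himg : (fun t => (f t, Lt (t + 1) (f t))) '' {t | ¬ b ≤ f t}
      ⊆ (Set.Icc m b) ×ˢ (Set.Iic N) := by
    rintro ⟨y, n⟩ ⟨t, ht, heq⟩
    simp only [Set.mem_setOf_eq, not_le] at ht
    obtain ⟨h1, h2⟩ := Prod.mk.injEq .. ▸ heq
    have hy : y ∈ Finset.Icc m b := by
      rw [Finset.mem_Icc]
      constructor
      · rw [← h1]; exact hf t
      · rw [← h1]; omega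
    constructor
    · simpa using hy
    · simp only [Set.mem_Iic]
      calc n = Lt (t + 1) (f t) := by rw [← h2]
        _ ≤ U (f t) := hle _ _
        _ ≤ N := Finset.le_sup (by rw [h1]; exact hy)
  have hinj : Set.InjOn (fun t => (f t, Lt (t + 1) (f t))) {t | ¬ b ≤ f t} := by
    intro t1 _ t2 _ heq
    by_contra hne
    rcases Nat.lt_or_ge t1 t2 with hlt | hge
    · have h1 : f t1 = f t2 := congrArg Prod.fst heq
      have h2 : Lt (t1 + 1) (f t1) = Lt (t2 + 1) (f t2) := congrArg Prod.snd heq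
      have h3 : Lt t2 (f t2) + 1 ≤ Lt (t2 + 1) (f t2) := by
        rw [hstep]; simp
      have h4 : Lt (t1 + 1) (f t1) ≤ Lt t2 (f t1) := hmono _ (by omega)
      rw [h1] at h2 h4
      omega
    · have hlt : t2 < t1 := by omega
      have h1 : f t1 = f t2 := congrArg Prod.fst heq
      have h2 : Lt (t1 + 1) (f t1) = Lt (t2 + 1) (f t2) := congrArg Prod.snd heq
      have h3 : Lt t1 (f t1) + 1 ≤ Lt (t1 + 1) (f t1) := by
        rw [hstep]; simp
      have h4 : Lt (t2 + 1) (f t2) ≤ Lt t1 (f t2) := hmono _ (by omega)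
      rw [h1] at h2 h3
      omega
  exact Set.Finite.of_finite_image
    (((Set.finite_Icc m b).prod (Set.finite_Iic N)).subset himg) hinj

lemma mL_zero_of_lb (a : Env) {κ : ℕ} (hκ : κ ≠ 0) (m : ℤ)
    (hf : ∀ t, m ≤ minWalkPos a hκ (fun _ => 0) t) :
    ∀ t x, x < m → (minMobState a hκ (fun _ => 0) t).2 x = 0 := by
  intro t
  induction t with
  | zero => intro x _; rfl
  | succ t ih =>
    intro x hx
    rw [mL_succ, ih x hx, if_neg (by have := hf t; omega)]

lemma particles_lb (a : Env) (hA : IsArrow a) {κ : ℕ} (hκ : κ ≠ 0) (m : ℤ) (hm : m ≤ 0)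
    (hz : ∀ t x, x < m → (minMobState a hκ (fun _ => 0) t).2 x = 0) :
    ∀ t j, m - 1 ≤ (minMobState a hκ (fun _ => 0) t).1 j := by
  intro t
  induction t with
  | zero => intro j; show m - 1 ≤ (0 : ℤ); omega
  | succ t ih =>
    intro j
    rw [mob_fst_succ, Function.update_apply]
    split_ifs with h
    · have hp : m ≤ minWalkPos a hκ (fun _ => 0) t := by
        by_contra hc
        push_neg at hc
        have h0 := hz (t + 1) _ hc
        rw [mL_succ, if_pos rfl] at h0
        omega
      rcases hA (minWalkPos a hκ (fun _ => 0) t)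
          ((minMobState a hκ (fun _ => 0) t).2 (minWalkPos a hκ (fun _ => 0) t) + 1) with
        h1 | h1 <;> rw [h1] <;> omega
    · exact ih j

lemma minWalkPos_lb (a : Env) (hA : IsArrow a) {κ : ℕ} (hκ : κ ≠ 0) (m : ℤ) (hm : m ≤ 0)
    (hz : ∀ t x, x < m → (minMobState a hκ (fun _ => 0) t).2 x = 0) :
    ∀ t, m - 1 ≤ minWalkPos a hκ (fun _ => 0) t := fun t =>
  particles_lb a hA hκ m hm hz t _

end KRT
namespace KRT

lemma iSup_stab {g : ℕ → ℕ} (hg : Monotone g) {T : ℕ} (hstab : ∀ t, T ≤ t → g t = g T) :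
    (⨆ t, (g t : ℕ∞)) = (g T : ℕ∞) := by
  apply le_antisymm
  · apply iSup_le
    intro t
    rcases le_total t T with h | h
    · exact_mod_cast Nat.cast_le.mpr (hg h)
    · rw [hstab t h]
  · exact le_iSup (fun t => ((g t : ℕ∞))) T

/-- Stabilization and complete-flow identity under transience of the min walk. -/
lemma mob_stab (a : Env) (hA : IsArrow a) {κ : ℕ} (hκ : κ ≠ 0)
    (htd : Tendsto (minWalkPos a hκ (fun _ => 0)) atTop atTop) :
    (∀ y : ℤ, (κ : ℤ) * ind y
        + (rhoN a (y - 1) ((minMobLocal a hκ (fun _ => 0) (y - 1)).toNat) : ℤ)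
        + (lamN a (y + 1) ((minMobLocal a hκ (fun _ => 0) (y + 1)).toNat) : ℤ)
        = ((minMobLocal a hκ (fun _ => 0) y).toNat : ℤ))
    ∧ (∃ m : ℤ, m ≤ 0 ∧ ∀ x, x < m → (minMobLocal a hκ (fun _ => 0) x).toNat = 0)
    ∧ (∀ x t, (minMobState a hκ (fun _ => 0) t).2 x ≤ (minMobLocal a hκ (fun _ => 0) x).toNat)
    ∧ (∀ x, ∃ T, (minMobLocal a hκ (fun _ => 0) x).toNat
        = (minMobState a hκ (fun _ => 0) T).2 x) := by
  -- stabilization below level x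
  have hstab : ∀ x : ℤ, ∃ T, ∀ z ≤ x, (∀ t, T ≤ t → (minMobState a hκ (fun _ => 0) t).2 z
      = (minMobState a hκ (fun _ => 0) T).2 z)
      ∧ (minMobLocal a hκ (fun _ => 0) z).toNat = (minMobState a hκ (fun _ => 0) T).2 z := by
    intro x
    obtain ⟨T, hT⟩ := (tendsto_atTop.mp htd (x + 1)).exists_forall_of_atTop
    refine ⟨T, fun z hz => ?_⟩
    have hc : ∀ t, T ≤ t → (minMobState a hκ (fun _ => 0) t).2 z
        = (minMobState a hκ (fun _ => 0) T).2 z := by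
      intro t ht
      induction t, ht using Nat.le_induction with
      | base => rfl
      | succ t ht ih =>
        rw [mL_succ, ih, if_neg (by have := hT t ht; omega), add_zero]
    refine ⟨hc, ?_⟩
    have := iSup_stab (mL_mono a hκ (fun _ => 0) z) hc
    rw [minMobLocal, this]
    simp
  refine ⟨?_, ?_, ?_, ?_⟩
  · intro y
    obtain ⟨T, hT⟩ := hstab (y + 1)
    obtain ⟨T2, hT2⟩ := (tendsto_atTop.mp htd (y + 2)).exists_forall_of_atTop
    set T' := max T T2 with hT'
    have hcard : (Finset.univ.filter
        fun j => (minMobState a hκ (fun _ => 0) T').1 j = y).card = 0 := by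
      rw [Finset.card_eq_zero]
      apply Finset.filter_false_of_mem
      intro j _
      have h1 : y + 2 ≤ minWalkPos a hκ (fun _ => 0) T' := hT2 T' (le_max_right _ _)
      have h2 := minIdx_le hκ (minMobState a hκ (fun _ => 0) T').1 j
      intro hj
      rw [hj] at h2
      have : minWalkPos a hκ (fun _ => 0) T' ≤ y := h2
      omega
    have hinv := mobINV a hA hκ T' y
    rw [hcard] at hinv
    have e1 : (minMobLocal a hκ (fun _ => 0) (y - 1)).toNat
        = (minMobState a hκ (fun _ => 0) T').2 (y - 1) := by
      rw [(hT (y - 1) (by omega)).2]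
      exact ((hT (y - 1) (by omega)).1 T' (le_max_left _ _)).symm
    have e2 : (minMobLocal a hκ (fun _ => 0) (y + 1)).toNat
        = (minMobState a hκ (fun _ => 0) T').2 (y + 1) := by
      rw [(hT (y + 1) (by omega)).2]
      exact ((hT (y + 1) (by omega)).1 T' (le_max_left _ _)).symm
    have e3 : (minMobLocal a hκ (fun _ => 0) y).toNat
        = (minMobState a hκ (fun _ => 0) T').2 y := by
      rw [(hT y (by omega)).2]
      exact ((hT y (by omega)).1 T' (le_max_left _ _)).symm
    rw [e1, e2, e3]
    push_cast at hinv ⊢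
    linarith
  · obtain ⟨T0, hT0⟩ := (tendsto_atTop.mp htd 0).exists_forall_of_atTop
    set F := (Finset.range (T0 + 1)).image (minWalkPos a hκ (fun _ => 0)) with hF
    have hFne : F.Nonempty := ⟨minWalkPos a hκ (fun _ => 0) 0,
      Finset.mem_image_of_mem _ (Finset.mem_range.mpr (by omega))⟩
    set m := min (F.min' hFne) 0 with hm
    have hmono : ∀ t, m ≤ minWalkPos a hκ (fun _ => 0) t := by
      intro t
      rcases Nat.lt_or_ge t (T0 + 1) with h | h
      · have : minWalkPos a hκ (fun _ => 0) t ∈ F :=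
          Finset.mem_image_of_mem _ (Finset.mem_range.mpr h)
        have := F.min'_le _ this
        omega
      · have := hT0 t (by omega)
        omega
    refine ⟨m, by omega, fun x hx => ?_⟩
    have hz := mL_zero_of_lb a hκ m hmono
    have : ∀ t, (minMobState a hκ (fun _ => 0) t).2 x = 0 := fun t => hz t x hx
    have hsup := iSup_stab (mL_mono a hκ (fun _ => 0) x)
      (T := 0) (fun t _ => by rw [this t, this 0])
    rw [minMobLocal, hsup, this 0]
    simp
  · intro x t
    obtain ⟨T, hT⟩ := hstab x
    obtain ⟨hc, hv⟩ := hT x le_rfl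
    rw [hv]
    calc (minMobState a hκ (fun _ => 0) t).2 x
        ≤ (minMobState a hκ (fun _ => 0) (max t T)).2 x :=
          mL_mono a hκ (fun _ => 0) x (le_max_left _ _)
      _ = (minMobState a hκ (fun _ => 0) T).2 x := hc _ (le_max_right _ _)
  · intro x
    obtain ⟨T, hT⟩ := hstab x
    exact ⟨T, (hT x le_rfl).2⟩

end KRT
namespace KRT

lemma walk_eq_mob1 (b : Env) (h1 : (1 : ℕ) ≠ 0) (t : ℕ) :
    (∀ i, (minMobState b h1 (fun _ => 0) t).1 i = walkX b 0 t)
      ∧ (minMobState b h1 (fun _ => 0) t).2 = (walkState b 0 t).2 := by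
  induction t with
  | zero => exact ⟨fun i => rfl, rfl⟩
  | succ t ih =>
    obtain ⟨ih1, ih2⟩ := ih
    have hpos : minWalkPos b h1 (fun _ => 0) t = walkX b 0 t := ih1 _
    constructor
    · intro i
      rw [mob_fst_succ, Function.update_apply, if_pos (Subsingleton.elim _ _), hpos, ih2]
      show _ = (walkState b 0 (t + 1)).1
      show _ = (walkState b 0 t).1 + b (walkState b 0 t).1
        (Function.update (walkState b 0 t).2 (walkState b 0 t).1
          ((walkState b 0 t).2 (walkState b 0 t).1 + 1) (walkState b 0 t).1)
      rw [Function.update_self]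
      rfl
    · rw [mob_snd_succ, hpos, ih2]
      rfl

lemma minWalkPos_eq_walkX (b : Env) (h1 : (1 : ℕ) ≠ 0) (t : ℕ) :
    minWalkPos b h1 (fun _ => 0) t = walkX b 0 t := (walk_eq_mob1 b h1 t).1 _

lemma walkLocal_eq_mobLocal (b : Env) (h1 : (1 : ℕ) ≠ 0) (x : ℤ) :
    walkLocal b 0 x = minMobLocal b h1 (fun _ => 0) x := by
  unfold walkLocal minMobLocal
  congr 1
  funext t
  rw [(walk_eq_mob1 b h1 t).2]

lemma tendsto_walk_iff_mob1 (b : Env) (h1 : (1 : ℕ) ≠ 0) :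
    Tendsto (walkX b 0) atTop atTop
      ↔ Tendsto (minWalkPos b h1 (fun _ => 0)) atTop atTop := by
  have : minWalkPos b h1 (fun _ => 0) = walkX b 0 := funext (minWalkPos_eq_walkX b h1)
  rw [this]

lemma isArrow_leftover {b : Env} (hb : IsArrow b) : IsArrow (leftoverEnv b) :=
  fun x n => hb x _

lemma isArrow_iterLO {a : Env} (hA : IsArrow a) : ∀ j, IsArrow (iterLO a j)
  | 0 => hA
  | j + 1 => isArrow_leftover (isArrow_iterLO hA j)

/-- Cumulative sequential local times. -/
def Lam (a : Env) : ℕ → ℤ → ℕ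
  | 0 => fun _ => 0
  | j + 1 => fun x => Lam a j x + (walkLocal (iterLO a j) 0 x).toNat

end KRT
namespace KRT

lemma Lam_step (a : Env) (hA : IsArrow a) (j : ℕ)
    (hoff : ∀ x n, iterLO a j x n = a x (n + Lam a j x))
    (hid : ∀ y : ℤ, (j : ℤ) * ind y + (rhoN a (y - 1) (Lam a j (y - 1)) : ℤ)
      + (lamN a (y + 1) (Lam a j (y + 1)) : ℤ) = (Lam a j y : ℤ))
    (htm : Tendsto (minWalkPos (iterLO a j) one_ne_zero (fun _ => 0)) atTop atTop) :
    (∀ x n, iterLO a (j + 1) x n = a x (n + Lam a (j + 1) x))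
    ∧ (∀ y : ℤ, ((j : ℤ) + 1) * ind y + (rhoN a (y - 1) (Lam a (j + 1) (y - 1)) : ℤ)
        + (lamN a (y + 1) (Lam a (j + 1) (y + 1)) : ℤ) = (Lam a (j + 1) y : ℤ))
    ∧ (∃ m1 : ℤ, m1 ≤ 0 ∧ ∀ x, x < m1 → (walkLocal (iterLO a j) 0 x).toNat = 0)
    ∧ (∀ x, ∃ T, (walkLocal (iterLO a j) 0 x).toNat
        = (minMobState (iterLO a j) one_ne_zero (fun _ => 0) T).2 x) := by
  have hAb : IsArrow (iterLO a j) := isArrow_iterLO hA j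
  obtain ⟨hflow, ⟨m1, hm10, hm1z⟩, hble, hach⟩ := mob_stab (iterLO a j) hAb one_ne_zero htm
  have hLL : ∀ x, (walkLocal (iterLO a j) 0 x).toNat
      = (minMobLocal (iterLO a j) one_ne_zero (fun _ => 0) x).toNat :=
    fun x => by rw [walkLocal_eq_mobLocal (iterLO a j) one_ne_zero x]
  refine ⟨?_, ?_, ⟨m1, hm10, fun x hx => by rw [hLL]; exact hm1z x hx⟩,
    fun x => by rw [hLL]; exact hach x⟩
  · intro x n
    show leftoverEnv (iterLO a j) x n = _
    rw [leftoverEnv, hoff]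
    congr 1
    simp only [Lam]
    omega
  · intro y
    have hb := hflow y
    rw [← hLL, ← hLL, ← hLL] at hb
    have o1 := rhoN_offset a (iterLO a j) (y - 1) (Lam a j (y - 1))
      (fun i => hoff (y - 1) i) ((walkLocal (iterLO a j) 0 (y - 1)).toNat)
    have o2 := lamN_offset a (iterLO a j) (y + 1) (Lam a j (y + 1))
      (fun i => hoff (y + 1) i) ((walkLocal (iterLO a j) 0 (y + 1)).toNat)
    have hidy := hid y
    simp only [Lam]
    push_cast at hb hidy o1 o2 ⊢
    linarith

end KRT
namespace KRT

lemma forward (a : Env) (hA : IsArrow a) {k : ℕ} (hk : k ≠ 0)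
    (h : KRightTransient a k) :
    Tendsto (minWalkPos a hk (fun _ => 0)) atTop atTop := by
  have h' : ∀ j < k, Tendsto (walkX (iterLO a j) 0) atTop atTop := h
  have claim : ∀ j, j ≤ k →
      (∀ x n, iterLO a j x n = a x (n + Lam a j x))
      ∧ (∀ y : ℤ, ((j : ℕ) : ℤ) * ind y + (rhoN a (y - 1) (Lam a j (y - 1)) : ℤ)
          + (lamN a (y + 1) (Lam a j (y + 1)) : ℤ) = (Lam a j y : ℤ))
      ∧ (∃ m : ℤ, m ≤ 0 ∧ ∀ x, x < m → Lam a j x = 0) := by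
    intro j
    induction j with
    | zero =>
      intro _
      exact ⟨fun x n => by simp [iterLO, Lam], fun y => by
        simp [Lam, rhoN_zero, lamN_zero], ⟨0, le_refl _, fun x hx => rfl⟩⟩
    | succ j ihj =>
      intro hjk
      obtain ⟨hoff, hid, m, hm0, hmz⟩ := ihj (by omega)
      have htm := (tendsto_walk_iff_mob1 (iterLO a j) one_ne_zero).mp (h' j (by omega))
      obtain ⟨hoff', hid', ⟨m1, hm10, hm1z⟩, hach⟩ := Lam_step a hA j hoff hid htm
      refine ⟨hoff', fun y => by push_cast; linarith [hid' y],
        ⟨min m m1, by omega, fun x hx => by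
          simp only [Lam]; rw [hmz x (by omega), hm1z x (by omega)]⟩⟩
  obtain ⟨_, hU, m, hm0, hmz⟩ := claim k le_rfl
  have hla := leastAction a hA hk (show 0 + k ≤ k by omega) (fun _ => 0) (Lam a k) a
    (fun x n => by simp) (fun y => by simp [rhoN_zero, lamN_zero]) hU (fun x => Nat.zero_le _)
  have hle : ∀ t x, (minMobState a hk (fun _ => 0) t).2 x ≤ Lam a k x := by
    intro t x
    have h2 := hla t x
    omega
  have hz : ∀ t x, x < m → (minMobState a hk (fun _ => 0) t).2 x = 0 := by
    intro t x hx
    have h1 := hle t x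
    have h2 := hmz x hx
    omega
  exact fire_tendsto _ (fun t => (minMobState a hk (fun _ => 0) t).2) (Lam a k) (m - 1)
    (fun t x => mL_succ a hk (fun _ => 0) t x) hle
    (minWalkPos_lb a hA hk m hm0 hz)

lemma backward (a : Env) (hA : IsArrow a) {k : ℕ} (hk : k ≠ 0)
    (htd : Tendsto (minWalkPos a hk (fun _ => 0)) atTop atTop) :
    KRightTransient a k := by
  obtain ⟨hU', ⟨m, hm0, hmz⟩, hble, hach⟩ := mob_stab a hA hk htd
  have claim : ∀ j, j ≤ k →
      (∀ x n, iterLO a j x n = a x (n + Lam a j x))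
      ∧ (∀ y : ℤ, ((j : ℕ) : ℤ) * ind y + (rhoN a (y - 1) (Lam a j (y - 1)) : ℤ)
          + (lamN a (y + 1) (Lam a j (y + 1)) : ℤ) = (Lam a j y : ℤ))
      ∧ (∀ x, Lam a j x ≤ (minMobLocal a hk (fun _ => 0) x).toNat)
      ∧ (∀ i, i < j → Tendsto (walkX (iterLO a i) 0) atTop atTop) := by
    intro j
    induction j with
    | zero =>
      intro _
      exact ⟨fun x n => by simp [iterLO, Lam], fun y => by
        simp [Lam, rhoN_zero, lamN_zero], fun x => Nat.zero_le _,
        fun i hi => absurd hi (Nat.not_lt_zero i)⟩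
    | succ j ihj =>
      intro hjk
      obtain ⟨hoff, hid, hlam, htds⟩ := ihj (by omega)
      have hAb := isArrow_iterLO hA j
      have hLA := leastAction a hA one_ne_zero (show j + 1 ≤ k by omega) (Lam a j)
        (fun x => (minMobLocal a hk (fun _ => 0) x).toNat) (iterLO a j) hoff hid hU' hlam
      have hz : ∀ t x, x < m →
          (minMobState (iterLO a j) one_ne_zero (fun _ => 0) t).2 x = 0 := by
        intro t x hx
        have h1 := hLA t x
        have h2 := hmz x hx
        beta_reduce at h1
        omega
      have htm : Tendsto (minWalkPos (iterLO a j) one_ne_zero (fun _ => 0)) atTop atTop :=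
        fire_tendsto _ (fun t => (minMobState (iterLO a j) one_ne_zero (fun _ => 0) t).2)
          (fun x => (minMobLocal a hk (fun _ => 0) x).toNat) (m - 1)
          (fun t x => mL_succ _ _ _ t x)
          (fun t x => by have h1 := hLA t x; beta_reduce at h1 ⊢; omega)
          (minWalkPos_lb (iterLO a j) hAb one_ne_zero m hm0 hz)
      obtain ⟨hoff', hid', _, hach'⟩ := Lam_step a hA j hoff hid htm
      refine ⟨hoff', fun y => by push_cast; linarith [hid' y], ?_, ?_⟩
      · intro x
        obtain ⟨T, hT⟩ := hach' x
        have h1 := hLA T x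
        beta_reduce at h1
        simp only [Lam]
        omega
      · intro i hi
        rcases Nat.lt_or_ge i j with hlt | hge
        · exact htds i hlt
        · have : i = j := by omega
          subst this
          exact (tendsto_walk_iff_mob1 _ one_ne_zero).mpr htm
  show ∀ j < k, Tendsto (walkX (iterLO a j) 0) atTop atTop
  exact (claim k le_rfl).2.2.2

end KRT


/-- A non-degenerate arrow environment is `k`-right transient iff the
`k`-minimum walk on it tends to `+∞`. -/
theorem kRightTransient_iff_minWalk_tendsto_atTop
    (a : Env) (hA : IsArrow a) (hnd : NonDeg a) {k : ℕ} (hk : k ≠ 0) :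
    KRightTransient a k ↔ Tendsto (minWalkPos a hk (fun _ => 0)) atTop atTop := by
  exact ⟨fun h => KRT.forward a hA hk h, fun h => KRT.backward a hA hk h⟩

end
end

section
/- Fix a non-degenerate arrow environment a and the k-minimum walk X on a with hitting time t_{-1} = inf{t ≥ 0 : X_t = -1}, and let M = sup{X_t : t < t_{-1}}. Define w_0 = k and for n ≥ 1, w_n = #{t < t_{-1} : X_t = n-1 and X_{t+1} ≠ n-2}. Then: (1) if t_{-1} = ∞, then for all n ≤ M, w_n equals k plus the total number of left crossings of the edge (n, n-1) by the k-min mob walk; (2) if t_{-1} < ∞, then for all n ≤ M, w_n equals k-1 plus the number of left crossings of (n, n-1) by the k-min mob walk up to time t_{-1}, and moreover w_{M+1} ≤ k-1. -/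
open MeasureTheory Filter

noncomputable section

attribute [local instance 10] Classical.propDecidable

namespace MinMobAux

variable (a : Env) {k : ℕ} (hk : k ≠ 0)

/-- Particle positions of the `k`-min mob walk started at `0`. -/
abbrev pos (t : ℕ) : Fin k → ℤ := (minMobState a hk (fun _ => 0) t).1

/-- Local times of the `k`-min mob walk started at `0`. -/
abbrev loc (t : ℕ) : ℤ → ℕ := (minMobState a hk (fun _ => 0) t).2

/-- The index of the particle moved at time `t`. -/
abbrev jj (t : ℕ) : Fin k := minIdx hk (pos a hk t)

/-- Shorthand for the minimum position. -/
abbrev X (t : ℕ) : ℤ := minWalkPos a hk (fun _ => 0) t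

/-- Shorthand for the target of the move at time `t`. -/
abbrev mv (t : ℕ) : ℤ := minMoveTo a hk (fun _ => 0) t

lemma minIdx_min (Xf : Fin k → ℤ) (i : Fin k) : Xf (minIdx hk Xf) ≤ Xf i := by
  have h : minIdx hk Xf ∈ Finset.univ.filter fun j => ∀ i, Xf j ≤ Xf i :=
    Finset.min'_mem _ _
  exact (Finset.mem_filter.mp h).2 i

lemma X_eq (t : ℕ) : X a hk t = pos a hk t (jj a hk t) := rfl

lemma X_le (t : ℕ) (i : Fin k) : X a hk t ≤ pos a hk t i := minIdx_min hk _ i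

lemma X_zero : X a hk 0 = 0 := rfl

lemma pos_succ (t : ℕ) :
    pos a hk (t + 1) = Function.update (pos a hk t) (jj a hk t) (mv a hk t) := by
  show (minMobState a hk (fun _ => 0) (t + 1)).1 = _
  simp only [minMobState, minMoveTo, jj, pos]
  simp only [Function.update_self]

lemma mv_def (t : ℕ) :
    mv a hk t = X a hk t + a (X a hk t) (loc a hk t (X a hk t) + 1) := by
  show (minMobState a hk (fun _ => 0) (t + 1)).1 _ = _
  simp only [minMobState, minWalkPos, jj, pos, loc]
  simp only [Function.update_self]

lemma loc_succ (t : ℕ) :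
    loc a hk (t + 1) = Function.update (loc a hk t) (X a hk t) (loc a hk t (X a hk t) + 1) := by
  show (minMobState a hk (fun _ => 0) (t + 1)).2 = _
  simp only [minMobState, minWalkPos, jj, pos, loc]

variable (hA : IsArrow a)

include hA in
lemma mv_pm (t : ℕ) : mv a hk t = X a hk t + 1 ∨ mv a hk t = X a hk t - 1 := by
  rcases hA (X a hk t) (loc a hk t (X a hk t) + 1) with h | h <;>
    rw [mv_def, h] <;> [left; right] <;> ring

include hA in
lemma X_succ_ge (t : ℕ) : X a hk t - 1 ≤ X a hk (t + 1) := by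
  have h : ∀ i, X a hk t - 1 ≤ pos a hk (t + 1) i := by
    intro i
    rw [pos_succ]
    by_cases hi : i = jj a hk t
    · subst hi
      rw [Function.update_self]
      rcases mv_pm a hk hA t with h | h <;> omega
    · rw [Function.update_of_ne hi]
      have := X_le a hk t i; omega
  exact h _

include hA in
lemma X_succ_of_left (t : ℕ) (h : mv a hk t = X a hk t - 1) :
    X a hk (t + 1) = X a hk t - 1 := by
  have hle : X a hk (t + 1) ≤ X a hk t - 1 := by
    have := X_le a hk (t + 1) (jj a hk t)
    rw [pos_succ, Function.update_self] at this
    omega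
  have := X_succ_ge a hk hA t
  omega

include hA in
lemma X_nonneg (t : ℕ) (h : ∀ s ≤ t, X a hk s ≠ -1) : 0 ≤ X a hk t := by
  induction t with
  | zero => rw [X_zero]
  | succ t ih =>
    have h1 := X_succ_ge a hk hA t
    have h2 := ih (fun s hs => h s (hs.trans (Nat.le_succ t)))
    have h3 := h (t + 1) le_rfl
    omega

/-- Number of particles at position `≥ n` at time `T`. -/
abbrev Nf (n : ℤ) (T : ℕ) : ℕ := (Finset.univ.filter fun i => n ≤ pos a hk T i).card

/-- Number of right crossings of the edge `(n-1, n)` among the first `T` steps. -/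
abbrev Rf (n : ℤ) (T : ℕ) : ℕ :=
  ((Finset.range T).filter fun t => X a hk t = n - 1 ∧ mv a hk t = n).card

lemma filter_range_succ_card (p : ℕ → Prop) [DecidablePred p] (T : ℕ) :
    ((Finset.range (T + 1)).filter p).card
      = ((Finset.range T).filter p).card + if p T then 1 else 0 := by
  rw [Finset.range_add_one, Finset.filter_insert]
  split_ifs with h
  · rw [Finset.card_insert_of_notMem (by simp)]
  · simp

lemma filter_update_card (f : Fin k → ℤ) (j : Fin k) (v : ℤ) (p : ℤ → Prop) [DecidablePred p] :
    (Finset.univ.filter fun i => p (Function.update f j v i)).card + (if p (f j) then 1 else 0)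
      = (Finset.univ.filter fun i => p (f i)).card + (if p v then 1 else 0) := by
  have key : ∀ g : Fin k → ℤ,
      (Finset.univ.filter fun i => p (g i)).card
        = ((Finset.univ.erase j).filter fun i => p (g i)).card + if p (g j) then 1 else 0 := by
    intro g
    have huniv : (Finset.univ : Finset (Fin k)) = insert j (Finset.univ.erase j) := by
      simp [Finset.insert_erase]
    conv_lhs => rw [huniv]
    rw [Finset.filter_insert]
    split_ifs with h
    · rw [Finset.card_insert_of_notMem (by simp)]
    · simp
  rw [key, key]
  have herase : ((Finset.univ.erase j).filter fun i => p (Function.update f j v i))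
      = (Finset.univ.erase j).filter fun i => p (f i) := by
    apply Finset.filter_congr
    intro i hi
    rw [Function.update_of_ne (Finset.mem_erase.mp hi).1]
  rw [herase, Function.update_self]
  ring

include hA in
lemma conservation (n : ℤ) (hn : 1 ≤ n) (T : ℕ) :
    Rf a hk n T = leftCrossUpTo a hk n T + Nf a hk n T := by
  induction T with
  | zero =>
    have hN : Nf a hk n 0 = 0 := by
      rw [Nf, Finset.card_eq_zero, Finset.filter_eq_empty_iff]
      intro i _
      show ¬ n ≤ pos a hk 0 i
      show ¬ n ≤ (0 : ℤ)
      omega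
    rw [hN]
    simp [Rf, leftCrossUpTo]
  | succ T ih =>
    have hR : Rf a hk n (T + 1)
        = Rf a hk n T + if (X a hk T = n - 1 ∧ mv a hk T = n) then 1 else 0 :=
      filter_range_succ_card _ _
    have hL : leftCrossUpTo a hk n (T + 1)
        = leftCrossUpTo a hk n T + if (X a hk T = n ∧ mv a hk T = n - 1) then 1 else 0 := by
      rw [leftCrossUpTo, leftCrossUpTo, filter_range_succ_card]
    have hN : Nf a hk n (T + 1) + (if n ≤ X a hk T then 1 else 0)
        = Nf a hk n T + (if n ≤ mv a hk T then 1 else 0) := by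
      have := filter_update_card (k := k) (pos a hk T) (jj a hk T) (mv a hk T) (fun x => n ≤ x)
      rw [Nf, Nf, pos_succ]
      exact this
    rcases mv_pm a hk hA T with h | h <;>
      · rw [hR, hL]
        split_ifs at hN ⊢ <;> omega

lemma Nf_le (n : ℤ) (T : ℕ) : Nf a hk n T ≤ k := by
  calc Nf a hk n T ≤ (Finset.univ : Finset (Fin k)).card := Finset.card_filter_le _ _
  _ = k := by simp

lemma Nf_eq_k (n : ℤ) (T : ℕ) (h : ∀ i, n ≤ pos a hk T i) : Nf a hk n T = k := by
  rw [Nf, Finset.filter_true_of_mem (fun i _ => h i)]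
  simp

lemma loc_count (t : ℕ) (x : ℤ) :
    loc a hk t x = ((Finset.range t).filter fun s => X a hk s = x).card := by
  induction t with
  | zero => simp [loc, minMobState]
  | succ t ih =>
    rw [loc_succ, filter_range_succ_card]
    by_cases h : X a hk t = x
    · rw [h, Function.update_self, if_pos rfl, ih]
    · rw [Function.update_of_ne (by exact fun hc => h hc.symm), if_neg h, ih]
      omega

lemma loc_succ_count (t : ℕ) (x : ℤ) :
    loc a hk (t + 1) x = loc a hk t x + if X a hk t = x then 1 else 0 := by
  rw [loc_count, loc_count, filter_range_succ_card]

lemma loc_le (t : ℕ) (x : ℤ) : loc a hk t x ≤ t := by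
  rw [loc_count]
  exact (Finset.card_filter_le _ _).trans (Finset.card_range t).le

include hA in
lemma reach (hnd : NonDeg a) (hne : ∀ t, X a hk t ≠ -1) (n : ℤ) (T0 : ℕ) :
    ∃ T, T0 ≤ T ∧ ∀ i, n ≤ pos a hk T i := by
  by_contra hcon
  push_neg at hcon
  have hbd : ∀ T, T0 ≤ T → X a hk T < n := by
    intro T hT
    obtain ⟨i, hi⟩ := hcon T hT
    exact lt_of_le_of_lt (X_le a hk T i) hi
  have hX0 : ∀ t, 0 ≤ X a hk t := fun t => X_nonneg a hk hA t (fun s _ => hne s)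
  have hkpos : Nonempty (Fin k) := ⟨⟨0, Nat.pos_of_ne_zero hk⟩⟩
  set C : ℤ := (Finset.univ.sup' Finset.univ_nonempty (pos a hk T0)) ⊔ n with hC
  have hub : ∀ t, T0 ≤ t → ∀ i, pos a hk t i ≤ C := by
    intro t ht
    induction t, ht using Nat.le_induction with
    | base =>
      intro i
      exact le_trans (Finset.le_sup' _ (Finset.mem_univ i)) le_sup_left
    | succ t ht ih =>
      intro i
      rw [pos_succ]
      by_cases hij : i = jj a hk t
      · subst hij
        rw [Function.update_self]
        have h1 := hbd t ht
        have h2 : n ≤ C := le_sup_right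
        rcases mv_pm a hk hA t with h | h <;> omega
      · rw [Function.update_of_ne hij]
        exact ih i
  have hXmem : ∀ t, T0 ≤ t → X a hk t ∈ Finset.Icc (0 : ℤ) C := by
    intro t ht
    rw [Finset.mem_Icc]
    exact ⟨hX0 t, le_trans (le_of_eq (X_eq a hk t)) (hub t ht _)⟩
  -- pigeonhole: some site is visited infinitely often
  have hinf : ∃ x ∈ Finset.Icc (0 : ℤ) C, {t : ℕ | X a hk t = x}.Infinite := by
    by_contra h
    push_neg at h
    have hfin : (Set.Ici T0).Finite := by
      apply Set.Finite.subset (Set.Finite.biUnion (Finset.Icc (0:ℤ) C).finite_toSet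
        (fun x hx => (h x (by exact_mod_cast hx))))
      intro t ht
      exact Set.mem_biUnion (by exact_mod_cast hXmem t ht) rfl
    exact (Set.Ici_infinite T0) hfin
  obtain ⟨x1, hx1, hx1inf⟩ := hinf
  have hSne : ((Finset.Icc (0:ℤ) C).filter fun x => {t : ℕ | X a hk t = x}.Infinite).Nonempty :=
    ⟨x1, Finset.mem_filter.mpr ⟨hx1, hx1inf⟩⟩
  set x0 : ℤ := ((Finset.Icc (0:ℤ) C).filter fun x => {t : ℕ | X a hk t = x}.Infinite).min' hSne
    with hx0def
  obtain ⟨hx0Icc, hx0inf⟩ := Finset.mem_filter.mp (Finset.min'_mem _ hSne)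
  -- local time at x0 is unbounded
  have hunb : ∀ m : ℕ, ∃ t, m ≤ loc a hk t x0 := by
    intro m
    obtain ⟨s, hs, hcard⟩ := hx0inf.exists_subset_card_eq m
    refine ⟨s.sup id + 1, ?_⟩
    have hsub : s ⊆ (Finset.range (s.sup id + 1)).filter fun u => X a hk u = x0 := by
      intro e he
      simp only [Finset.mem_filter, Finset.mem_range]
      exact ⟨Nat.lt_succ_of_le (Finset.le_sup (f := id) he), hs he⟩
    have hcle := Finset.card_le_card hsub
    rw [loc_count]
    omega
  -- the local time takes every value, at a visit to x0
  have hhit : ∀ m : ℕ, 1 ≤ m → ∃ t, loc a hk t x0 = m - 1 ∧ X a hk t = x0 := by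
    intro m hm
    obtain ⟨t0, ht0⟩ := hunb m
    have hex2 : ∃ u, m ≤ loc a hk (u + 1) x0 := by
      cases t0 with
      | zero =>
        have hz : loc a hk 0 x0 = 0 := rfl
        omega
      | succ u => exact ⟨u, ht0⟩
    have hudef : Nat.find hex2 = Nat.find hex2 := rfl
    set u := Nat.find hex2 with hu
    have hspec : m ≤ loc a hk (u + 1) x0 := Nat.find_spec hex2
    have hmin : ¬ m ≤ loc a hk u x0 := by
      rcases Nat.eq_zero_or_pos u with h0 | h0
      · rw [h0]
        have hz : loc a hk 0 x0 = 0 := rfl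
        omega
      · obtain ⟨v, hv⟩ := Nat.exists_eq_succ_of_ne_zero (Nat.pos_iff_ne_zero.mp h0)
        have hv' : ¬ m ≤ loc a hk (v + 1) x0 := Nat.find_min hex2 (by omega)
        rw [hv]
        exact hv'
    have hstep := loc_succ_count a hk u x0
    by_cases hXu : X a hk u = x0
    · refine ⟨u, ?_, hXu⟩
      rw [if_pos hXu] at hstep
      omega
    · rw [if_neg hXu] at hstep
      omega
  -- infinitely many left arrows at x0
  have harr : ∀ N : ℕ, ∃ i, N ≤ i ∧ 1 ≤ i ∧ a x0 i = -1 := by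
    intro N
    obtain ⟨i, hiN, hine⟩ := hnd x0 (max N 1)
    rcases hA x0 i with h1 | h1
    · rcases hA x0 (i + 1) with h2 | h2
      · rw [h1, h2] at hine
        exact absurd rfl hine
      · exact ⟨i + 1, by omega, by omega, h2⟩
    · exact ⟨i, by omega, by omega, h1⟩
  -- arbitrarily late visits to x0 - 1
  have hfreq : ∀ B : ℕ, ∃ u, B ≤ u ∧ X a hk u = x0 - 1 := by
    intro B
    obtain ⟨i, hiB, hi1, hia⟩ := harr (B + 1)
    obtain ⟨t, hloc, hXt⟩ := hhit i hi1
    have hmvt : mv a hk t = x0 - 1 := by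
      rw [mv_def, hXt, hloc]
      have hii : i - 1 + 1 = i := by omega
      rw [hii, hia]
      ring
    have hXt1 : X a hk (t + 1) = x0 - 1 := by
      rw [X_succ_of_left a hk hA t (by rw [hmvt, hXt]), hXt]
    have := loc_le a hk t x0
    exact ⟨t + 1, by omega, hXt1⟩
  -- x0 ≥ 1
  have hx0pos : 1 ≤ x0 := by
    by_contra hcon2
    obtain ⟨u, _, hu⟩ := hfreq 0
    rcases Finset.mem_Icc.mp hx0Icc with ⟨h0, _⟩
    have := hne u
    omega
  -- x0 - 1 is visited infinitely often, contradicting minimality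
  have hinf' : {t : ℕ | X a hk t = x0 - 1}.Infinite := by
    intro hfin
    obtain ⟨B, hB⟩ := hfin.bddAbove
    obtain ⟨u, hu1, hu2⟩ := hfreq (B + 1)
    have := hB hu2
    omega
  have hmem' : x0 - 1 ∈ (Finset.Icc (0:ℤ) C).filter fun x => {t : ℕ | X a hk t = x}.Infinite := by
    rw [Finset.mem_filter]
    rcases Finset.mem_Icc.mp hx0Icc with ⟨_, h1⟩
    exact ⟨Finset.mem_Icc.mpr ⟨by omega, by omega⟩, hinf'⟩
  have hfinal := Finset.min'_le _ _ hmem'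
  rw [← hx0def] at hfinal
  omega

lemma below_unique (t1 : ℕ) (Mx : ℤ) (hMx : X a hk t1 = Mx) :
    ∀ t, t1 ≤ t → ∀ i i', pos a hk t i < Mx → pos a hk t i' < Mx → i = i' := by
  intro t ht
  induction t, ht using Nat.le_induction with
  | base =>
    intro i i' hi _
    have := X_le a hk t1 i
    exact absurd hi (by omega)
  | succ t ht ih =>
    have hnot : ∀ i, i ≠ jj a hk t → ¬ pos a hk (t+1) i < Mx := by
      intro i hij hlt
      rw [pos_succ, Function.update_of_ne hij] at hlt
      have hXi := X_le a hk t i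
      rw [X_eq] at hXi
      exact hij (ih i (jj a hk t) hlt (by omega))
    intro i i' hi hi'
    by_cases h1 : i = jj a hk t
    · by_cases h2 : i' = jj a hk t
      · rw [h1, h2]
      · exact absurd hi' (hnot i' h2)
    · exact absurd hi (hnot i h1)

include hA in
lemma last_step (T : ℕ) (hT : X a hk T = -1) (hpre : ∀ s < T, X a hk s ≠ -1) :
    0 < T ∧ X a hk (T - 1) = 0 ∧ mv a hk (T - 1) = -1 := by
  have hT0 : T ≠ 0 := by
    intro h
    rw [h, X_zero] at hT
    omega
  obtain ⟨u, rfl⟩ := Nat.exists_eq_succ_of_ne_zero hT0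
  have hT' : X a hk (u + 1) = -1 := hT
  have hXu : 0 ≤ X a hk u := X_nonneg a hk hA u (fun s hs => hpre s (by omega))
  have hmvu : mv a hk u = -1 := by
    by_contra hmv
    have hge : ∀ i, 0 ≤ pos a hk (u+1) i := by
      intro i
      rw [pos_succ]
      by_cases hij : i = jj a hk u
      · subst hij
        rw [Function.update_self]
        rcases mv_pm a hk hA u with h | h <;> omega
      · rw [Function.update_of_ne hij]
        have := X_le a hk u i
        omega
    have h2 := hge (jj a hk (u+1))
    rw [← X_eq] at h2
    omega
  have hXu0 : X a hk u = 0 := by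
    have hX1 : X a hk (u + 1) = X a hk u - 1 := X_succ_of_left a hk hA u (by
      rcases mv_pm a hk hA u with h | h
      · omega
      · exact h)
    omega
  refine ⟨by omega, ?_, ?_⟩ <;> simpa using ‹_›
  
include hA in
lemma lcross_zero (T : ℕ) (hT : X a hk T = -1) (hpre : ∀ s < T, X a hk s ≠ -1) :
    leftCrossUpTo a hk 0 T = 1 := by
  obtain ⟨hT0, hX, hmv⟩ := last_step a hk hA T hT hpre
  rw [leftCrossUpTo]
  have hset : ((Finset.range T).filter fun t =>
      minWalkPos a hk (fun _ => 0) t = 0 ∧ minMoveTo a hk (fun _ => 0) t = 0 - 1) = {T - 1} := by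
    ext t
    simp only [Finset.mem_filter, Finset.mem_range, Finset.mem_singleton]
    constructor
    · rintro ⟨ht, h1, h2⟩
      have h1' : X a hk t = 0 := h1
      have h2' : mv a hk t = -1 := by
        have h2'' : mv a hk t = 0 - 1 := h2
        omega
      have h3 : X a hk (t+1) = -1 := by
        rw [X_succ_of_left a hk hA t (by omega)]
        omega
      have h4 : ¬ (t + 1 < T) := fun hlt => hpre _ hlt h3
      omega
    · rintro rfl
      have hmv' : mv a hk (T - 1) = 0 - 1 := by omega
      exact ⟨by omega, hX, hmv'⟩
  rw [hset]
  rfl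

include hA in
lemma wfun_eq_Rf (T : ℕ) (hT : X a hk T = -1) (hpre : ∀ s < T, X a hk s ≠ -1)
    (n : ℤ) (hn1 : 1 ≤ n) : wfun a hk n = (Rf a hk n T : ℕ∞) := by
  have hBH : ∀ t, beforeHit a hk t ↔ t < T := by
    intro t
    constructor
    · intro h
      by_contra hc
      exact h T (by omega) hT
    · intro h s hs
      exact hpre s (by omega)
  rw [wfun, if_neg (by omega)]
  have hfe : ∀ T' : ℕ, ((Finset.range T').filter fun t => beforeHit a hk t ∧
        X a hk t = n - 1 ∧ mv a hk t ≠ n - 2)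
      = (Finset.range T').filter fun t => t < T ∧ X a hk t = n - 1 ∧ mv a hk t = n := by
    intro T'
    apply Finset.filter_congr
    intro t _
    rw [hBH]
    constructor
    · rintro ⟨h1, h2, h3⟩
      refine ⟨h1, h2, ?_⟩
      rcases mv_pm a hk hA t with h | h <;> omega
    · rintro ⟨h1, h2, h3⟩
      exact ⟨h1, h2, by omega⟩
  apply le_antisymm
  · apply iSup_le
    intro T'
    rw [hfe]
    apply Nat.cast_le.mpr
    apply Finset.card_le_card
    intro t ht
    simp only [Finset.mem_filter, Finset.mem_range] at ht ⊢
    exact ⟨ht.2.1, ht.2.2⟩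
  · have heq2 : ((Finset.range T).filter fun t => X a hk t = n - 1 ∧ mv a hk t = n)
        = (Finset.range T).filter fun t => t < T ∧ X a hk t = n - 1 ∧ mv a hk t = n := by
      apply Finset.filter_congr
      intro t ht
      simp only [Finset.mem_range] at ht
      constructor
      · rintro ⟨h2, h3⟩
        exact ⟨ht, h2, h3⟩
      · rintro ⟨-, h2, h3⟩
        exact ⟨h2, h3⟩
    have heq : Rf a hk n T = ((Finset.range T).filter fun t => beforeHit a hk t ∧
        X a hk t = n - 1 ∧ mv a hk t ≠ n - 2).card := by
      rw [show Rf a hk n T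
          = ((Finset.range T).filter fun t => X a hk t = n - 1 ∧ mv a hk t = n).card from rfl,
        heq2, ← hfe T]
    rw [heq]
    exact le_iSup (fun T' : ℕ => (((Finset.range T').filter fun t => beforeHit a hk t ∧
        X a hk t = n - 1 ∧ mv a hk t ≠ n - 2).card : ℕ∞)) T

lemma Nf_at_T (T : ℕ) (hT : X a hk T = -1) (t1 : ℕ) (ht1T : t1 < T) (Mx : ℤ)
    (hMxv : X a hk t1 = Mx) (n : ℤ) (hn1 : 1 ≤ n) (hnM : n ≤ Mx) :
    Nf a hk n T = k - 1 := by
  have huniq := below_unique a hk t1 Mx hMxv T (le_of_lt ht1T)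
  have hjneg : pos a hk T (jj a hk T) = -1 := by
    rw [← X_eq]
    exact hT
  have hset : (Finset.univ.filter fun i => n ≤ pos a hk T i)
      = Finset.univ.erase (jj a hk T) := by
    ext i
    simp only [Finset.mem_filter, Finset.mem_erase, Finset.mem_univ, and_true, true_and]
    constructor
    · intro h hij
      rw [hij] at h
      omega
    · intro h
      by_contra hc
      push_neg at hc
      exact h (huniq i (jj a hk T) (by omega) (by omega))
  rw [Nf, hset, Finset.card_erase_of_mem (Finset.mem_univ _)]
  simp

include hA in
lemma part1 (hnd : NonDeg a) (hne : ∀ t, X a hk t ≠ -1) (n : ℕ) :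
    wfun a hk (n : ℤ) = (k : ℕ∞) + leftCrossTotal a hk (n : ℤ) := by
  by_cases hn0 : n = 0
  · subst hn0
    rw [wfun, if_pos (by norm_num)]
    have hzero : ∀ T : ℕ, leftCrossUpTo a hk (0 : ℤ) T = 0 := by
      intro T
      rw [leftCrossUpTo, Finset.card_eq_zero, Finset.filter_eq_empty_iff]
      intro t _
      rintro ⟨h1, h2⟩
      have h1' : X a hk t = 0 := h1
      have h2' : mv a hk t = -1 := by
        have h2'' : mv a hk t = (0 : ℤ) - 1 := h2
        omega
      have h3 : X a hk (t + 1) = -1 := by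
        rw [X_succ_of_left a hk hA t (by omega)]
        omega
      exact hne _ h3
    have hLC : leftCrossTotal a hk ((0:ℕ) : ℤ) = 0 := by
      rw [Nat.cast_zero, leftCrossTotal]
      simp [hzero]
    rw [hLC]
    simp
  · have hn1 : 1 ≤ (n : ℤ) := by
      have := Nat.one_le_iff_ne_zero.mpr hn0
      exact_mod_cast this
    have hW : wfun a hk (n : ℤ) = ⨆ T : ℕ, (Rf a hk (n : ℤ) T : ℕ∞) := by
      rw [wfun, if_neg (by exact_mod_cast hn0)]
      apply iSup_congr
      intro T
      apply congrArg (fun c : ℕ => (c : ℕ∞))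
      apply congrArg Finset.card
      apply Finset.filter_congr
      intro t _
      constructor
      · rintro ⟨-, h2, h3⟩
        have h2' : X a hk t = (n:ℤ) - 1 := h2
        have h3' : mv a hk t ≠ (n:ℤ) - 2 := h3
        refine ⟨h2', ?_⟩
        show mv a hk t = (n:ℤ)
        rcases mv_pm a hk hA t with h | h <;> omega
      · rintro ⟨h2, h3⟩
        have h2' : X a hk t = (n:ℤ) - 1 := h2
        have h3' : mv a hk t = (n:ℤ) := h3
        refine ⟨fun s _ => hne s, h2', ?_⟩
        show mv a hk t ≠ (n:ℤ) - 2
        omega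
    have hcons := conservation a hk hA (n : ℤ) hn1
    have hNle := Nf_le a hk (n : ℤ)
    rw [hW, leftCrossTotal]
    apply le_antisymm
    · apply iSup_le
      intro T
      have h1 : Rf a hk (n:ℤ) T ≤ k + leftCrossUpTo a hk (n:ℤ) T := by
        have := hcons T
        have := hNle T
        omega
      calc (Rf a hk (n:ℤ) T : ℕ∞) ≤ ((k + leftCrossUpTo a hk (n:ℤ) T : ℕ) : ℕ∞) := by
            exact_mod_cast h1
      _ = (k : ℕ∞) + (leftCrossUpTo a hk (n:ℤ) T : ℕ∞) := by push_cast; rfl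
      _ ≤ (k : ℕ∞) + ⨆ T' : ℕ, (leftCrossUpTo a hk (n:ℤ) T' : ℕ∞) :=
        add_le_add le_rfl (le_iSup (fun T' : ℕ => (leftCrossUpTo a hk (n:ℤ) T' : ℕ∞)) T)
    · rcases eq_or_ne (⨆ T : ℕ, (leftCrossUpTo a hk (n:ℤ) T : ℕ∞)) ⊤ with htop | htop
      · have hge : (⊤ : ℕ∞) ≤ ⨆ T : ℕ, (Rf a hk (n:ℤ) T : ℕ∞) := by
          rw [← htop]
          apply iSup_mono
          intro T
          have h1 : leftCrossUpTo a hk (n:ℤ) T ≤ Rf a hk (n:ℤ) T := by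
            have := hcons T
            omega
          exact_mod_cast h1
        exact le_trans le_top hge
      · lift (⨆ T : ℕ, (leftCrossUpTo a hk (n:ℤ) T : ℕ∞)) to ℕ using htop with m hm
        have hub2 : ∀ T, leftCrossUpTo a hk (n:ℤ) T ≤ m := by
          intro T
          have h1 : (leftCrossUpTo a hk (n:ℤ) T : ℕ∞) ≤ (m : ℕ∞) := by
            rw [hm]
            exact le_iSup (fun T' : ℕ => (leftCrossUpTo a hk (n:ℤ) T' : ℕ∞)) T
          exact_mod_cast h1
        have hex : ∃ T1, leftCrossUpTo a hk (n:ℤ) T1 = m := by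
          by_contra hc
          push_neg at hc
          rcases Nat.eq_zero_or_pos m with h0 | h0
          · exact hc 0 (by have := hub2 0; omega)
          · have hb : ∀ T : ℕ, (leftCrossUpTo a hk (n:ℤ) T : ℕ∞) ≤ ((m - 1 : ℕ) : ℕ∞) := by
              intro T
              have h1 := hub2 T
              have h2 := hc T
              exact_mod_cast (by omega : leftCrossUpTo a hk (n:ℤ) T ≤ m - 1)
            have hble := iSup_le hb
            rw [← hm] at hble
            have : m ≤ m - 1 := by exact_mod_cast hble
            omega
        obtain ⟨T1, hT1⟩ := hex
        have hmono : ∀ T T' : ℕ, T ≤ T' →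
            leftCrossUpTo a hk (n:ℤ) T ≤ leftCrossUpTo a hk (n:ℤ) T' := by
          intro T T' hTT'
          apply Finset.card_le_card
          exact Finset.filter_subset_filter _ (Finset.range_subset_range.mpr hTT')
        obtain ⟨T2, hT2ge, hT2⟩ := reach a hk hA hnd hne (n:ℤ) T1
        have hLT2 : leftCrossUpTo a hk (n:ℤ) T2 = m :=
          le_antisymm (hub2 T2) (hT1 ▸ hmono T1 T2 hT2ge)
        have hNT2 : Nf a hk (n:ℤ) T2 = k := Nf_eq_k a hk _ _ hT2
        have hRT2 : Rf a hk (n:ℤ) T2 = m + k := by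
          have := hcons T2
          omega
        calc (k:ℕ∞) + (m:ℕ∞) = ((Rf a hk (n:ℤ) T2 : ℕ) : ℕ∞) := by
              rw [hRT2]; push_cast; ring
        _ ≤ ⨆ T : ℕ, (Rf a hk (n:ℤ) T : ℕ∞) :=
              le_iSup (fun T : ℕ => (Rf a hk (n:ℤ) T : ℕ∞)) T2

end MinMobAux

/-- Crossing identities for `w_n` of the `k`-min mob walk: (1) if the
`k`-minimum walk never hits `-1` then for every `n ≤ M = sup{X_t}` (expressed as
`∃ t, n ≤ X_t`), `w_n = k +` the total number of left crossings of the edge `(n, n-1)`;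
(2) if `T = t₋₁` is the finite hitting time of `-1` and `Mx = sup{X_t : t < T}`, then for
all `n ≤ Mx`, `w_n = (k-1) +` the number of left crossings of `(n, n-1)` up to time `T`,
and moreover `w_{Mx+1} ≤ k - 1`. -/
theorem crossing_lemma_min_mob_walk
    (a : Env) (hA : IsArrow a) (hnd : NonDeg a) {k : ℕ} (hk : k ≠ 0) :
    ((∀ t, minWalkPos a hk (fun _ => 0) t ≠ -1) →
      ∀ n : ℕ, (∃ t, (n : ℤ) ≤ minWalkPos a hk (fun _ => 0) t) →
        wfun a hk (n : ℤ) = (k : ℕ∞) + leftCrossTotal a hk (n : ℤ)) ∧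
    (∀ T : ℕ, minWalkPos a hk (fun _ => 0) T = -1 →
      (∀ s < T, minWalkPos a hk (fun _ => 0) s ≠ -1) →
      ∀ Mx : ℤ, (∀ t < T, minWalkPos a hk (fun _ => 0) t ≤ Mx) →
        (∃ t < T, minWalkPos a hk (fun _ => 0) t = Mx) →
        ((∀ n : ℕ, (n : ℤ) ≤ Mx →
          wfun a hk (n : ℤ) = ((k - 1 : ℕ) : ℕ∞) + (leftCrossUpTo a hk (n : ℤ) T : ℕ∞)) ∧
        ((Finset.range T).filter fun t => minWalkPos a hk (fun _ => 0) t = Mx ∧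
            minMoveTo a hk (fun _ => 0) t ≠ Mx - 1).card ≤ k - 1)) := by
  constructor
  · intro hne n _
    exact MinMobAux.part1 a hk hA hnd hne n
  · intro T hT hpre Mx hMxub hMxex
    obtain ⟨t1, ht1T, ht1⟩ := hMxex
    have hT' : MinMobAux.X a hk T = -1 := hT
    have hpre' : ∀ s < T, MinMobAux.X a hk s ≠ -1 := hpre
    have hMxub' : ∀ t, t < T → MinMobAux.X a hk t ≤ Mx := hMxub
    have ht1' : MinMobAux.X a hk t1 = Mx := ht1
    obtain ⟨hT0, hXlast, hmvlast⟩ := MinMobAux.last_step a hk hA T hT' hpre'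
    have hMx0 : (0:ℤ) ≤ Mx := by
      have h0 : MinMobAux.X a hk 0 = 0 := MinMobAux.X_zero a hk
      have h1 := hMxub' 0 hT0
      omega
    constructor
    · intro n hnM
      by_cases hn0 : n = 0
      · subst hn0
        rw [Nat.cast_zero, wfun, if_pos rfl, MinMobAux.lcross_zero a hk hA T hT' hpre']
        exact_mod_cast (by omega : k = k - 1 + 1)
      · have hn1 : 1 ≤ (n:ℤ) := by
          have := Nat.one_le_iff_ne_zero.mpr hn0
          exact_mod_cast this
        rw [MinMobAux.wfun_eq_Rf a hk hA T hT' hpre' (n:ℤ) hn1,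
          MinMobAux.conservation a hk hA (n:ℤ) hn1 T,
          MinMobAux.Nf_at_T a hk T hT' t1 ht1T Mx ht1' (n:ℤ) hn1 hnM,
          Nat.cast_add]
        exact add_comm _ _
    · have hcount : ((Finset.range T).filter fun t => minWalkPos a hk (fun _ => 0) t = Mx ∧
          minMoveTo a hk (fun _ => 0) t ≠ Mx - 1)
          = (Finset.range T).filter fun t =>
              MinMobAux.X a hk t = (Mx + 1) - 1 ∧ MinMobAux.mv a hk t = Mx + 1 := by
        apply Finset.filter_congr
        intro t _
        constructor
        · rintro ⟨h1, h2⟩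
          have h1' : MinMobAux.X a hk t = Mx := h1
          have h2' : MinMobAux.mv a hk t ≠ Mx - 1 := h2
          refine ⟨by omega, ?_⟩
          show MinMobAux.mv a hk t = Mx + 1
          rcases MinMobAux.mv_pm a hk hA t with h | h <;> omega
        · rintro ⟨h1, h2⟩
          have h1' : MinMobAux.X a hk t = Mx := by omega
          refine ⟨h1', ?_⟩
          show MinMobAux.mv a hk t ≠ Mx - 1
          omega
      rw [hcount]
      have hRf : MinMobAux.Rf a hk (Mx + 1) T = ((Finset.range T).filter fun t =>
          MinMobAux.X a hk t = (Mx + 1) - 1 ∧ MinMobAux.mv a hk t = Mx + 1).card := rfl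
      rw [← hRf, MinMobAux.conservation a hk hA (Mx + 1) (by omega) T]
      have hL0 : leftCrossUpTo a hk (Mx + 1) T = 0 := by
        rw [leftCrossUpTo, Finset.card_eq_zero, Finset.filter_eq_empty_iff]
        intro t ht
        rintro ⟨h1, h2⟩
        have h1' : MinMobAux.X a hk t = Mx + 1 := h1
        have h2' := hMxub' t (Finset.mem_range.mp ht)
        omega
      have hNle : MinMobAux.Nf a hk (Mx + 1) T ≤ k - 1 := by
        have hsub : (Finset.univ.filter fun i => Mx + 1 ≤ MinMobAux.pos a hk T i)
            ⊆ Finset.univ.erase (MinMobAux.jj a hk T) := by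
          intro i hi
          rw [Finset.mem_filter] at hi
          rw [Finset.mem_erase]
          refine ⟨?_, Finset.mem_univ _⟩
          intro hij
          have hjneg : MinMobAux.pos a hk T (MinMobAux.jj a hk T) = -1 := hT'
          rw [hij] at hi
          omega
        have hcle := Finset.card_le_card hsub
        rw [Finset.card_erase_of_mem (Finset.mem_univ _)] at hcle
        simpa [MinMobAux.Nf] using hcle
      omega

end
end
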